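/- arXiv:2004.00398 — 5 statements merged into one kernel-verified Lean document; each statement's English description precedes it below -/
import Mathlib

section
/- Let Λ ⊆ ℂ^r be a theta lattice of rank r, I a nonzero ideal of O_K, and Λ' = (1/√N(I))·IΛ. Then (Λ', F_h) is even, i.e. h(λ', λ') ∈ 2ℤ for every λ' ∈ Λ'. -/
noncomputable section

open Complex Matrix
open scoped ComplexOrder

/-- `ω_K`: `√-m` if `m ≢ 3 (mod 4)`, `(1+√-m)/2` if `m ≡ 3 (mod 4)`. -/
def omegaK (m : ℕ) : ℂ :=
  if m % 4 = 3 then (1 + Complex.I * (Real.sqrt m : ℂ)) / 2 else Complex.I * (Real.sqrt m : ℂ)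

/-- The ring of integers `O_K = ℤ[ω_K]` of `K = ℚ(√-m)`, as a subring of `ℂ`. -/
def OK (m : ℕ) : Subring ℂ := Subring.closure {omegaK m}

/-- The absolute norm `N(I) = #(O_K / I)` of an ideal `I` of `O_K`. -/
def idealNorm (m : ℕ) (I : Ideal (OK m)) : ℕ := Nat.card ((OK m) ⧸ I)

/-- The ideal `I(L)` of `O_K` generated by the entries of a matrix `L`. -/
def idealOf {m n : ℕ} (L : Matrix (Fin n) (Fin n) (OK m)) : Ideal (OK m) :=
  Ideal.span (Set.range fun p : Fin n × Fin n => L p.1 p.2)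

/-- A matrix over `O_K` viewed as a complex matrix. -/
def matC {m n : ℕ} (L : Matrix (Fin n) (Fin n) (OK m)) : Matrix (Fin n) (Fin n) ℂ :=
  L.map (fun x => (x : ℂ))

/-- `IΛ`: the set of finite sums `Σ cᵢ λᵢ` with `cᵢ ∈ I`, `λᵢ ∈ Λ`. -/
def idealMulSet (m : ℕ) {r : ℕ} (I : Ideal (OK m)) (Λ : Set (Fin r → ℂ)) : Set (Fin r → ℂ) :=
  { x | ∃ (N : ℕ) (c : Fin N → OK m) (v : Fin N → (Fin r → ℂ)),
      (∀ i, c i ∈ I) ∧ (∀ i, v i ∈ Λ) ∧ x = ∑ i, ((c i : ℂ) • v i) }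

/-- The scaled set `a • S`. -/
def smulSet {r : ℕ} (a : ℂ) (S : Set (Fin r → ℂ)) : Set (Fin r → ℂ) := (fun x => a • x) '' S

/-- `Λ' = (1/√N(I)) · (IΛ)`. -/
def scaledLattice (m : ℕ) {r : ℕ} (I : Ideal (OK m)) (Λ : Set (Fin r → ℂ)) :
    Set (Fin r → ℂ) :=
  smulSet ((Real.sqrt (idealNorm m I) : ℂ))⁻¹ (idealMulSet m I Λ)

/-- An `O_K`-lattice of rank `r` in `ℂ^r`: an `O_K`-submodule which is a free `ℤ`-module of
rank `2r` spanning `ℂ^r` over `ℝ`. -/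
structure IsOKLattice (m r : ℕ) (Λ : Set (Fin r → ℂ)) : Prop where
  zero_mem : (0 : Fin r → ℂ) ∈ Λ
  add_mem : ∀ x ∈ Λ, ∀ y ∈ Λ, x + y ∈ Λ
  smul_mem : ∀ c : OK m, ∀ x ∈ Λ, (c : ℂ) • x ∈ Λ
  exists_basis : ∃ b : Fin (2 * r) → (Fin r → ℂ), (∀ i, b i ∈ Λ) ∧
      ∀ x ∈ Λ, ∃! c : Fin (2 * r) → ℤ, x = ∑ i, (c i : ℂ) • b i
  spans : Submodule.span ℝ Λ = ⊤

/-- The standard Hermitian form `h(x,y) = xᴴ y` on `ℂ^r`. -/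
def hermForm {r : ℕ} (x y : Fin r → ℂ) : ℂ := ∑ i, (starRingEnd ℂ) (x i) * y i

/-- The dual lattice `Λ^# = {x : Re h(x,λ) ∈ ℤ for all λ ∈ Λ}`. -/
def dualLattice {r : ℕ} (Λ : Set (Fin r → ℂ)) : Set (Fin r → ℂ) :=
  { x | ∀ y ∈ Λ, ∃ k : ℤ, (hermForm x y).re = (k : ℝ) }

/-- A theta lattice: an even unimodular `O_K`-lattice. -/
structure IsThetaLattice (m r : ℕ) (Λ : Set (Fin r → ℂ)) : Prop where
  toIsOKLattice : IsOKLattice m r Λ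
  even : ∀ x ∈ Λ, ∃ k : ℤ, hermForm x x = 2 * (k : ℂ)
  unimodular : dualLattice Λ = Λ

/-- The Hermitian half space `H_n`. -/
def inHalfSpace {n : ℕ} (Z : Matrix (Fin n) (Fin n) ℂ) : Prop :=
  (((2 * Complex.I)⁻¹) • (Z - Zᴴ)).PosDef

/-- `n`-tuples of lattice vectors, viewed as `r × n` matrices with all columns in `Λ`. -/
def latticeTuples {r : ℕ} (Λ : Set (Fin r → ℂ)) (n : ℕ) : Set (Matrix (Fin r) (Fin n) ℂ) :=
  { X | ∀ j, (fun i => X i j) ∈ Λ }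

/-- The Hermitian theta series `Θ(Z,Λ)⁽ⁿ⁾ = Σ_{λ ∈ Λⁿ} exp(iπ tr(λᴴ λ Z))`. -/
def thetaSeries {r : ℕ} (Λ : Set (Fin r → ℂ)) {n : ℕ} (Z : Matrix (Fin n) (Fin n) ℂ) : ℂ :=
  ∑' X : latticeTuples Λ n,
    Complex.exp (Complex.I * (Real.pi : ℂ) *
      ((X : Matrix (Fin r) (Fin n) ℂ)ᴴ * (X : Matrix (Fin r) (Fin n) ℂ) * Z).trace)

/-- `|d_K|`, the absolute value of the discriminant of `K = ℚ(√-m)`. -/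
def dKabs (m : ℕ) : ℕ := if m % 4 = 3 then m else 4 * m

/-- `√d_K = i √|d_K|`. -/
def sqrtdK (m : ℕ) : ℂ := Complex.I * (Real.sqrt (dKabs m) : ℂ)

/-- `O_K^⋆ = (1/√d_K) O_K`. -/
def OKstar (m : ℕ) : Set ℂ := { t | ∃ a ∈ OK m, t = a / sqrtdK m }

/-- Membership in `Λ(2, O_K)`: Hermitian `2×2` matrices with integral diagonal and
off-diagonal entries in `O_K^⋆`. -/
def inLambda2 (m : ℕ) (T : Matrix (Fin 2) (Fin 2) ℂ) : Prop :=
  Tᴴ = T ∧ (∃ k : ℤ, T 0 0 = (k : ℂ)) ∧ (∃ l : ℤ, T 1 1 = (l : ℂ)) ∧ T 0 1 ∈ OKstar m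

/-- `ε(T) = max {q ∈ ℕ : (1/q) T ∈ Λ(2,O_K)}`. -/
def eps (m : ℕ) (T : Matrix (Fin 2) (Fin 2) ℂ) : ℕ :=
  sSup { q : ℕ | 0 < q ∧ inLambda2 m (((q : ℂ))⁻¹ • T) }

/-- `√-m = i√m`. -/
def sqrtNegM (m : ℕ) : ℂ := Complex.I * (Real.sqrt m : ℂ)

/-- Atkin-Lehner matrices `V_d`. -/
def IsAtkinLehner (m d : ℕ) (V : Matrix (Fin 2) (Fin 2) ℂ) : Prop :=
  V.det = 1 ∧ ∃ a b c e : ℤ,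
    V = ((Real.sqrt d : ℂ))⁻¹ •
      !![(a : ℂ) * d, (b : ℂ) * ((m : ℂ) + sqrtNegM m);
         (c : ℂ) * ((m : ℂ) - sqrtNegM m), (e : ℂ) * d]

/-- `J = (0, -I; I, 0)`. -/
def Jmat (n : ℕ) : Matrix (Fin n ⊕ Fin n) (Fin n ⊕ Fin n) ℂ := Matrix.fromBlocks 0 (-1) 1 0

/-- Membership in `SU(n,n;ℂ)`. -/
def inSU (n : ℕ) (M : Matrix (Fin n ⊕ Fin n) (Fin n ⊕ Fin n) ℂ) : Prop :=
  M.det = 1 ∧ Mᴴ * Jmat n * M = Jmat n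

/-- Membership in the Hermitian modular group `Γ_n(O_K)`. -/
def inGammaN (m n : ℕ) (M : Matrix (Fin n ⊕ Fin n) (Fin n ⊕ Fin n) ℂ) : Prop :=
  inSU n M ∧ ∀ i j, M i j ∈ OK m

/-- The action `M⟨Z⟩ = (AZ+B)(CZ+D)⁻¹`. -/
def moebius {n : ℕ} (M : Matrix (Fin n ⊕ Fin n) (Fin n ⊕ Fin n) ℂ)
    (Z : Matrix (Fin n) (Fin n) ℂ) : Matrix (Fin n) (Fin n) ℂ :=
  (M.toBlocks₁₁ * Z + M.toBlocks₁₂) * (M.toBlocks₂₁ * Z + M.toBlocks₂₂)⁻¹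

/-- A Hermitian modular form of degree 2 and weight `r`: holomorphic on `H₂` and modular
with respect to `Γ₂(O_K)`. -/
structure IsHermitianModularForm2 (m : ℕ) (r : ℤ) (f : Matrix (Fin 2) (Fin 2) ℂ → ℂ) : Prop where
  holo : DifferentiableOn ℂ (fun Z : Fin 2 → Fin 2 → ℂ => f (Matrix.of Z))
    { Z | inHalfSpace (Matrix.of Z) }
  modular : ∀ M, inGammaN m 2 M → ∀ Z, inHalfSpace Z →
    f (moebius M Z) = (M.toBlocks₂₁ * Z + M.toBlocks₂₂).det ^ r * f Z

/-- The index set `{T ∈ Λ(2,O_K) : T ≥ 0}` of the Fourier expansion. -/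
def lambda2PSD (m : ℕ) : Set (Matrix (Fin 2) (Fin 2) ℂ) := { T | inLambda2 m T ∧ T.PosSemidef }

/-- `f` has Fourier expansion `f(Z) = Σ_T α(T) e^{2πi tr(TZ)}` on `H₂`. -/
def IsFourierExpansion (m : ℕ) (f : Matrix (Fin 2) (Fin 2) ℂ → ℂ)
    (α : Matrix (Fin 2) (Fin 2) ℂ → ℂ) : Prop :=
  ∀ Z, inHalfSpace Z → HasSum (fun T : lambda2PSD m =>
    α T * Complex.exp (2 * (Real.pi : ℂ) * Complex.I *
      ((T : Matrix (Fin 2) (Fin 2) ℂ) * Z).trace)) (f Z)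

/-- For `T = (k, t; t̄, l)` and `η`, the matrix `(1, t/η; t̄/η, kl/η²)`. -/
def suganoMat (T : Matrix (Fin 2) (Fin 2) ℂ) (η : ℕ) : Matrix (Fin 2) (Fin 2) ℂ :=
  !![1, T 0 1 / (η : ℂ); T 1 0 / (η : ℂ), T 0 0 * T 1 1 / (η : ℂ) ^ 2]

/-- Sugano's Maass relation for the Fourier coefficients `α`. -/
def SuganoRelation (m : ℕ) (r : ℤ) (α : Matrix (Fin 2) (Fin 2) ℂ → ℂ) : Prop :=
  ∀ T, inLambda2 m T → T.PosSemidef → T ≠ 0 →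
    α T = ∑ η ∈ (eps m T).divisors, (η : ℂ) ^ (r - 1) * α (suganoMat T η)

-- The natural number represented by a complex number (junk value `0` otherwise).
open scoped Classical in
def natValue (z : ℂ) : ℕ := if h : ∃ n : ℕ, (n : ℂ) = z then h.choose else 0

/-- Krieg's Maass relation: `α(T) = Σ_{η ∣ ε(T)} η^{r-1} α*(-d_K det T / η²)`. -/
def KriegRelation (m : ℕ) (r : ℤ) (α : Matrix (Fin 2) (Fin 2) ℂ → ℂ) (αstar : ℕ → ℂ) : Prop :=
  ∀ T, inLambda2 m T → T.PosSemidef → T ≠ 0 →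
    α T = ∑ η ∈ (eps m T).divisors,
      (η : ℂ) ^ (r - 1) * αstar (natValue ((dKabs m : ℂ) * T.det / (η : ℂ) ^ 2))

namespace SE

def tpar (m : ℕ) : ℤ := if m % 4 = 3 then 1 else 0
def qpar (m : ℕ) : ℤ := if m % 4 = 3 then ((m : ℤ) + 1)/4 else (m : ℤ)

variable {m : ℕ}

lemma omega_im (hm : 0 < m) : 0 < (omegaK m).im := by
  have h : (0:ℝ) < Real.sqrt m := Real.sqrt_pos.mpr (by exact_mod_cast hm)
  unfold omegaK
  split <;> simp [Complex.div_im, Complex.add_im, Complex.mul_im] <;> positivity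

lemma omega_sq : (omegaK m)^2 = (tpar m : ℂ) * omegaK m - (qpar m : ℂ) := by
  have hs : (Real.sqrt m : ℂ) * (Real.sqrt m : ℂ) = (m : ℂ) := by
    rw [← Complex.ofReal_mul, Real.mul_self_sqrt (by positivity)]
    norm_cast
  unfold omegaK tpar qpar
  split
  case isTrue h =>
    have h4 : ((((m:ℤ)+1)/4 : ℤ) : ℂ) * 4 = (m : ℂ) + 1 := by
      have h1 : (4:ℤ) ∣ (m:ℤ) + 1 := by omega
      have h2 : ((m:ℤ)+1)/4 * 4 = (m:ℤ)+1 := Int.ediv_mul_cancel h1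
      exact_mod_cast congrArg (Int.cast : ℤ → ℂ) h2
    push_cast
    push_cast at h4
    linear_combination h4/4 + (Complex.I^2/4) * hs + ((m:ℂ)/4) * Complex.I_sq
  case isFalse h =>
    push_cast
    rw [mul_pow, Complex.I_sq, ← Complex.ofReal_pow, sq, Real.mul_self_sqrt (by positivity)]
    push_cast; ring

lemma conj_omega : (starRingEnd ℂ) (omegaK m) = (tpar m : ℂ) - omegaK m := by
  unfold omegaK tpar
  split <;> simp [_root_.map_div₀, _root_.map_add, _root_.map_mul, _root_.map_ofNat, Complex.conj_I, Complex.conj_ofReal] <;>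
    push_cast <;> ring

lemma coords_unique (hm : 0 < m) {g0 g1 h0 h1 : ℤ}
    (h : (g0 : ℂ) + (g1 : ℂ) * omegaK m = (h0 : ℂ) + (h1 : ℂ) * omegaK m) :
    g0 = h0 ∧ g1 = h1 := by
  have him : 0 < (omegaK m).im := by
    have h : (0:ℝ) < Real.sqrt m := Real.sqrt_pos.mpr (by exact_mod_cast hm)
    unfold omegaK
    split <;> simp [Complex.div_im, Complex.add_im, Complex.mul_im] <;> positivity
  have e : ∀ a b : ℤ, ((a : ℂ) + (b : ℂ) * omegaK m).im = (b : ℝ) * (omegaK m).im := by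
    intro a b; simp [Complex.add_im, Complex.mul_im]
  have h2 : (g1 : ℝ) * (omegaK m).im = (h1 : ℝ) * (omegaK m).im := by
    rw [← e g0 g1, ← e h0 h1, h]
  have hg1 : g1 = h1 := by exact_mod_cast mul_right_cancel₀ him.ne' h2
  refine ⟨?_, hg1⟩
  subst hg1
  have : (g0 : ℂ) = h0 := by linear_combination h
  exact_mod_cast this

/-- The explicit description of `OK m`. -/
lemma mem_OK_iff {z : ℂ} : z ∈ OK m ↔ ∃ g0 g1 : ℤ, z = (g0 : ℂ) + (g1 : ℂ) * omegaK m := by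
  constructor
  · intro hz
    let S : Subring ℂ :=
      { carrier := { w | ∃ g0 g1 : ℤ, w = (g0 : ℂ) + (g1 : ℂ) * omegaK m }
        zero_mem' := ⟨0, 0, by simp⟩
        one_mem' := ⟨1, 0, by simp⟩
        add_mem' := by
          rintro x y ⟨a, b, rfl⟩ ⟨c, d, rfl⟩
          exact ⟨a + c, b + d, by push_cast; ring⟩
        neg_mem' := by
          rintro x ⟨a, b, rfl⟩
          exact ⟨-a, -b, by push_cast; ring⟩
        mul_mem' := by
          rintro x y ⟨a, b, rfl⟩ ⟨c, d, rfl⟩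
          refine ⟨a*c - b*d*qpar m, a*d + b*c + b*d*tpar m, ?_⟩
          have hsq : (omegaK m)^2 = (tpar m : ℂ) * omegaK m - (qpar m : ℂ) := omega_sq
          push_cast
          linear_combination (b : ℂ) * d * hsq }
    have : OK m ≤ S := Subring.closure_le.mpr (by
      intro w hw
      rcases hw with rfl
      exact ⟨0, 1, by simp⟩)
    exact this hz
  · rintro ⟨a, b, rfl⟩
    have hω : omegaK m ∈ OK m := Subring.subset_closure rfl
    exact Subring.add_mem _ (intCast_mem _ a) (Subring.mul_mem _ (intCast_mem _ b) hω)

lemma conj_mem_OK {z : ℂ} (hz : z ∈ OK m) : (starRingEnd ℂ) z ∈ OK m := by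
  rw [mem_OK_iff] at hz ⊢
  obtain ⟨a, b, rfl⟩ := hz
  exact ⟨a + b * tpar m, -b, by
    rw [_root_.map_add, _root_.map_mul]
    rw [conj_omega]
    simp [Complex.conj_ofReal]
    push_cast
    ring⟩


/-- `ω` as an element of `OK m`. -/
def w (m : ℕ) : OK m := ⟨omegaK m, Subring.subset_closure rfl⟩

lemma real_OK (hm : 0 < m) (z : OK m) {g : ℤ} (h : (z : ℂ) = (g : ℂ)) :
    ∀ g0 g1 : ℤ, (z : ℂ) = (g0 : ℂ) + (g1 : ℂ) * omegaK m → g0 = g ∧ g1 = 0 := by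
  intro g0 g1 h01
  have : (g0 : ℂ) + (g1 : ℂ) * omegaK m = (g : ℂ) + (0 : ℤ) * omegaK m := by
    rw [← h01, h]; push_cast; ring
  exact coords_unique hm this

structure HNF (m : ℕ) (I : Ideal (OK m)) where
  a : ℤ
  b : ℤ
  c : ℤ
  ha : 0 < a
  hc : 0 < c
  B : OK m
  hB : B ∈ I
  hBc : (B : ℂ) = (b : ℂ) + (c : ℂ) * omegaK m
  haI : ((a : ℤ) : OK m) ∈ I
  span : ∀ z ∈ I, ∃ s u : ℤ, (z : ℂ) = (s : ℂ) * (a : ℂ) + (u : ℂ) * (B : ℂ)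
  himc : ∀ z ∈ I, ∀ g0 g1 : ℤ, (z : ℂ) = (g0 : ℂ) + (g1 : ℂ) * omegaK m → c ∣ g1
  hima : ∀ z ∈ I, ∀ g0 : ℤ, (z : ℂ) = (g0 : ℂ) → a ∣ g0

lemma exists_hnf (hm : 0 < m) (I : Ideal (OK m)) (hI : I ≠ ⊥) : Nonempty (HNF m I) := by
  classical
  -- coordinates of any element of OK m
  have coords : ∀ z : OK m, ∃ g0 g1 : ℤ, (z : ℂ) = (g0 : ℂ) + (g1 : ℂ) * omegaK m :=
    fun z => mem_OK_iff.mp z.2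
  -- the ideal of ω-coefficients
  let J1 : Ideal ℤ :=
    { carrier := { y | ∃ z ∈ I, ∃ x : ℤ, (z : ℂ) = (x : ℂ) + (y : ℂ) * omegaK m }
      zero_mem' := ⟨0, I.zero_mem, 0, by push_cast; simp⟩
      add_mem' := by
        rintro y y' ⟨z, hz, x, hx⟩ ⟨z', hz', x', hx'⟩
        exact ⟨z + z', I.add_mem hz hz', x + x', by push_cast [hx, hx']; ring⟩
      smul_mem' := by
        rintro n y ⟨z, hz, x, hx⟩
        refine ⟨(n : OK m) * z, I.mul_mem_left _ hz, n * x, ?_⟩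
        simp only [smul_eq_mul]; push_cast [hx]; ring }
  -- the ideal of real elements
  let J0 : Ideal ℤ :=
    { carrier := { x | ∃ z ∈ I, (z : ℂ) = (x : ℂ) }
      zero_mem' := ⟨0, I.zero_mem, by push_cast; simp⟩
      add_mem' := by
        rintro x x' ⟨z, hz, hx⟩ ⟨z', hz', hx'⟩
        exact ⟨z + z', I.add_mem hz hz', by push_cast [hx, hx']; ring⟩
      smul_mem' := by
        rintro n x ⟨z, hz, hx⟩
        exact ⟨(n : OK m) * z, I.mul_mem_left _ hz, by
          simp only [smul_eq_mul]; push_cast [hx]; ring⟩ }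
  -- a nonzero element of I
  obtain ⟨z₀, hz₀I, hz₀⟩ := Submodule.exists_mem_ne_zero_of_ne_bot hI
  have hz₀c : (z₀ : ℂ) ≠ 0 := fun h => hz₀ (Subtype.ext h)
  -- J1 is nonzero
  have hJ1 : ∃ y ∈ J1, y ≠ 0 := by
    obtain ⟨g0, g1, hg⟩ := coords z₀
    by_cases h1 : g1 = 0
    · refine ⟨g0, ⟨w m * z₀, I.mul_mem_left _ hz₀I, 0, ?_⟩, ?_⟩
      · show (omegaK m) * (z₀ : ℂ) = _
        rw [hg, h1]; push_cast; ring
      · intro h0; apply hz₀c; rw [hg, h1, h0]; push_cast; ring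
    · exact ⟨g1, ⟨z₀, hz₀I, g0, hg⟩, h1⟩
  -- J0 is nonzero
  have hJ0 : ∃ x ∈ J0, x ≠ 0 := by
    set zc : OK m := ⟨(starRingEnd ℂ) (z₀ : ℂ), conj_mem_OK z₀.2⟩
    have hmem : z₀ * zc ∈ I := I.mul_mem_right _ hz₀I
    have hre : ((z₀ * zc : OK m) : ℂ).im = 0 := by
      show ((z₀ : ℂ) * (starRingEnd ℂ) (z₀ : ℂ)).im = 0
      rw [Complex.mul_conj]; simp
    obtain ⟨g0, g1, hg⟩ := coords (z₀ * zc)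
    have e : ∀ a b : ℤ, ((a : ℂ) + (b : ℂ) * omegaK m).im = (b : ℝ) * (omegaK m).im := by
      intro a b; simp [Complex.add_im, Complex.mul_im]
    have him : 0 < (omegaK m).im := by
      have h : (0:ℝ) < Real.sqrt m := Real.sqrt_pos.mpr (by exact_mod_cast hm)
      unfold omegaK
      split <;> simp [Complex.div_im, Complex.add_im, Complex.mul_im] <;> positivity
    have hg1 : g1 = 0 := by
      have := hre
      rw [hg, e] at this
      exact_mod_cast (mul_eq_zero.mp this).resolve_right him.ne'
    refine ⟨g0, ⟨z₀ * zc, hmem, by rw [hg, hg1]; push_cast; ring⟩, ?_⟩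
    intro h0
    have : ((z₀ * zc : OK m) : ℂ) = 0 := by rw [hg, hg1, h0]; push_cast; ring
    have : (z₀ : ℂ) * (starRingEnd ℂ) (z₀ : ℂ) = 0 := this
    rcases mul_eq_zero.mp this with h | h
    · exact hz₀c h
    · exact hz₀c (by simpa using congrArg (starRingEnd ℂ) h)
  -- positive generators
  have gen : ∀ (J : Ideal ℤ), (∃ y ∈ J, y ≠ 0) →
      ∃ g : ℤ, 0 < g ∧ g ∈ J ∧ ∀ y ∈ J, g ∣ y := by
    rintro J ⟨y, hy, hy0⟩
    obtain ⟨g, hg⟩ := (IsPrincipalIdealRing.principal J).principal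
    have hdvd : ∀ x ∈ J, g ∣ x := by
      intro x hx
      rw [hg] at hx
      obtain ⟨n, hn⟩ := Submodule.mem_span_singleton.mp hx
      exact ⟨n, by rw [← hn, smul_eq_mul]; ring⟩
    have hgJ : g ∈ J := by
      rw [hg]; exact Submodule.mem_span_singleton_self g
    have hg0 : g ≠ 0 := by
      rintro rfl
      exact hy0 (by simpa using hdvd y hy)
    refine ⟨|g|, abs_pos.mpr hg0, ?_, fun x hx => (abs_dvd g x).mpr (hdvd x hx)⟩
    rcases abs_choice g with h | h
    · rw [h]; exact hgJ
    · rw [h]; exact J.neg_mem hgJ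
  obtain ⟨c, hc, hcJ1, hcdvd⟩ := gen J1 hJ1
  obtain ⟨a, ha, haJ0, hadvd⟩ := gen J0 hJ0
  obtain ⟨B, hBI, b, hBc⟩ := hcJ1
  obtain ⟨A, hAI, hAc⟩ := haJ0
  have haI : ((a : ℤ) : OK m) ∈ I := by
    have : ((a : ℤ) : OK m) = A := by
      apply Subtype.ext
      rw [show (((a : ℤ) : OK m) : ℂ) = ((a : ℤ) : ℂ) by push_cast; ring, hAc]
    rw [this]; exact hAI
  have span : ∀ z ∈ I, ∃ s u : ℤ, (z : ℂ) = (s : ℂ) * (a : ℂ) + (u : ℂ) * (B : ℂ) := by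
    intro z hz
    obtain ⟨g0, g1, hg⟩ := coords z
    obtain ⟨u, hu⟩ := hcdvd g1 ⟨z, hz, g0, hg⟩
    have hz2 : z - (u : ℤ) * B ∈ I := I.sub_mem hz (I.mul_mem_left _ hBI)
    have hz2c : ((z - (u : ℤ) * B : OK m) : ℂ) = ((g0 - u * b : ℤ) : ℂ) := by
      push_cast [hg, hBc, hu]; ring
    obtain ⟨s, hs⟩ := hadvd _ ⟨_, hz2, hz2c⟩
    refine ⟨s, u, ?_⟩
    have hs' : (g0 : ℂ) - (u : ℂ) * (b : ℂ) = (a : ℂ) * (s : ℂ) := by exact_mod_cast congrArg (Int.cast : ℤ → ℂ) hs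
    have hu' : (g1 : ℂ) = (c : ℂ) * (u : ℂ) := by exact_mod_cast congrArg (Int.cast : ℤ → ℂ) hu
    rw [hg, hBc]
    linear_combination hs' + omegaK m * hu'
  have himc : ∀ z ∈ I, ∀ g0 g1 : ℤ, (z : ℂ) = (g0 : ℂ) + (g1 : ℂ) * omegaK m → c ∣ g1 :=
    fun z hz g0 g1 h => hcdvd g1 ⟨z, hz, g0, h⟩
  have hima : ∀ z ∈ I, ∀ g0 : ℤ, (z : ℂ) = (g0 : ℂ) → a ∣ g0 :=
    fun z hz g0 h => hadvd g0 ⟨z, hz, h⟩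
  exact ⟨⟨a, b, c, ha, hc, B, hBI, hBc, haI, span, himc, hima⟩⟩


lemma hnf_divs (hm : 0 < m) {I : Ideal (OK m)} (H : HNF m I) :
    ∃ a1 b1 k : ℤ, H.a = H.c * a1 ∧ H.b = H.c * b1 ∧
      b1 ^ 2 + tpar m * b1 + qpar m = a1 * k := by
  obtain ⟨a, b, c, ha, hc, B, hB, hBc, haI, span, himc, hima⟩ := H
  dsimp only at *
  -- c ∣ a
  have hca : c ∣ a := by
    refine himc (w m * ((a : ℤ) : OK m)) (I.mul_mem_left _ haI) 0 a ?_
    show omegaK m * (((a : ℤ) : OK m) : ℂ) = _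
    push_cast; ring
  -- ω * B ∈ I and its coordinates
  have hwB : w m * B ∈ I := I.mul_mem_left _ hB
  have hwBc : ((w m * B : OK m) : ℂ) = ((-(c * qpar m) : ℤ) : ℂ) + ((b + c * tpar m : ℤ) : ℂ) * omegaK m := by
    show omegaK m * (B : ℂ) = _
    rw [hBc]
    push_cast
    linear_combination (c : ℂ) * omega_sq
  have hcb : c ∣ b := by
    have h1 : c ∣ b + c * tpar m := himc _ hwB _ _ hwBc
    have := dvd_sub h1 (dvd_mul_right c (tpar m))
    simpa using this
  obtain ⟨a1, ha1⟩ := hca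
  obtain ⟨b1, hb1⟩ := hcb
  -- span applied to ω * B
  obtain ⟨s, u, hsu⟩ := span _ hwB
  have hsu' : ((s * a + u * b : ℤ) : ℂ) + ((u * c : ℤ) : ℂ) * omegaK m
      = ((-(c * qpar m) : ℤ) : ℂ) + ((b + c * tpar m : ℤ) : ℂ) * omegaK m := by
    rw [← hwBc, hsu, hBc]; push_cast; ring
  obtain ⟨h1, h2⟩ := coords_unique hm hsu'
  -- h1 : s * a + u * b = -(c * qpar m), h2 : u * c = b + c * tpar m
  refine ⟨a1, b1, -s, ha1, hb1, ?_⟩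
  have hu : u = b1 + tpar m := by
    have : u * c = (b1 + tpar m) * c := by rw [h2, hb1]; ring
    exact mul_right_cancel₀ hc.ne' this
  subst ha1 hb1 hu
  have h4 : c * (s * a1 + (b1 + tpar m) * b1) = c * (-qpar m) := by linear_combination h1
  have h3 : s * a1 + (b1 + tpar m) * b1 = -qpar m := mul_left_cancel₀ hc.ne' h4
  linarith [h3]

lemma eq_zero_of_dvd_of_abs_lt {c d : ℤ} (hc : 0 < c) (h : c ∣ d) (h1 : -c < d) (h2 : d < c) :
    d = 0 := by
  obtain ⟨k, rfl⟩ := h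
  rcases lt_trichotomy k 0 with hk | hk | hk
  · nlinarith
  · simp [hk]
  · nlinarith

lemma hnf_card {m : ℕ} (hm : 0 < m) {I : Ideal (OK m)} (H : HNF m I) :
    (Nat.card ((OK m) ⧸ I) : ℤ) = H.a * H.c := by
  obtain ⟨a, b, c, ha, hc, B, hB, hBc, haI, span, himc, hima⟩ := H
  dsimp only at *
  haveI : NeZero a.toNat := ⟨by omega⟩
  haveI : NeZero c.toNat := ⟨by omega⟩
  set f : ZMod a.toNat × ZMod c.toNat → (OK m) ⧸ I :=
    fun p => Ideal.Quotient.mk I (((p.1.val : ℤ) : OK m) + ((p.2.val : ℤ) : OK m) * w m)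
    with hf
  have hwc : ((w m : OK m) : ℂ) = omegaK m := rfl
  have hinj : Function.Injective f := by
    rintro ⟨x, y⟩ ⟨x', y'⟩ h
    have hd : (((x.val : ℤ) : OK m) + ((y.val : ℤ) : OK m) * w m)
        - (((x'.val : ℤ) : OK m) + ((y'.val : ℤ) : OK m) * w m) ∈ I := Ideal.Quotient.eq.mp h
    have hdc : (((((x.val : ℤ) : OK m) + ((y.val : ℤ) : OK m) * w m)
        - (((x'.val : ℤ) : OK m) + ((y'.val : ℤ) : OK m) * w m) : OK m) : ℂ)
        = (((x.val : ℤ) - (x'.val : ℤ) : ℤ) : ℂ) + (((y.val : ℤ) - (y'.val : ℤ) : ℤ) : ℂ) * omegaK m := by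
      push_cast [hwc]; ring
    have hy : ((y.val : ℤ) - (y'.val : ℤ)) = 0 := by
      refine eq_zero_of_dvd_of_abs_lt hc (himc _ hd _ _ hdc) ?_ ?_
      · have := y'.val_lt; have h2 := y.val_lt; omega
      · have := y.val_lt; have h2 := y'.val_lt; omega
    have hx : ((x.val : ℤ) - (x'.val : ℤ)) = 0 := by
      refine eq_zero_of_dvd_of_abs_lt ha (hima _ hd _ ?_) ?_ ?_
      · rw [hdc, hy]; push_cast; ring
      · have := x'.val_lt; have h2 := x.val_lt; omega
      · have := x.val_lt; have h2 := x'.val_lt; omega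
    have hxe : x = x' := ZMod.val_injective _ (by omega)
    have hye : y = y' := ZMod.val_injective _ (by omega)
    cases hxe; cases hye; rfl
  have hsurj : Function.Surjective f := by
    intro z'
    obtain ⟨z, rfl⟩ := Ideal.Quotient.mk_surjective z'
    obtain ⟨g0, g1, hg⟩ := mem_OK_iff.mp z.2
    set u := g1 / c with hu
    set r := g1 % c with hr
    set s := (g0 - u * b) / a with hs
    set r0 := (g0 - u * b) % a with hr0
    have hg1 : g1 = c * u + r := (Int.mul_ediv_add_emod g1 c).symm
    have hg0 : g0 - u * b = a * s + r0 := (Int.mul_ediv_add_emod _ a).symm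
    have hrlt : 0 ≤ r ∧ r < c := ⟨Int.emod_nonneg _ hc.ne', Int.emod_lt_of_pos _ hc⟩
    have hr0lt : 0 ≤ r0 ∧ r0 < a := ⟨Int.emod_nonneg _ ha.ne', Int.emod_lt_of_pos _ ha⟩
    refine ⟨⟨(r0.toNat : ZMod a.toNat), (r.toNat : ZMod c.toNat)⟩, ?_⟩
    rw [hf]
    dsimp only
    rw [ZMod.val_cast_of_lt (by omega), ZMod.val_cast_of_lt (by omega)]
    have key : (((r0.toNat : ℤ) : OK m) + ((r.toNat : ℤ) : OK m) * w m)
        = z - (u : ℤ) * B - (s : ℤ) * ((a : ℤ) : OK m) := by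
      apply Subtype.ext
      push_cast [hwc, hg, hBc, Int.toNat_of_nonneg hr0lt.1, Int.toNat_of_nonneg hrlt.1]
      have e1 : (g1 : ℂ) = (c : ℂ) * u + r := by exact_mod_cast congrArg (Int.cast : ℤ → ℂ) hg1
      have e2 : (g0 : ℂ) - u * b = a * s + r0 := by exact_mod_cast congrArg (Int.cast : ℤ → ℂ) hg0
      push_cast at e1 e2
      linear_combination -e2 - omegaK m * e1
    rw [key]
    rw [Ideal.Quotient.eq]
    have : z - ((u : ℤ) * B + (s : ℤ) * ((a : ℤ) : OK m)) - z = -((u : ℤ) * B + (s : ℤ) * ((a : ℤ) : OK m)) := by ring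
    have hmem : (u : ℤ) * B + (s : ℤ) * ((a : ℤ) : OK m) ∈ I :=
      I.add_mem (I.mul_mem_left _ hB) (I.mul_mem_left _ haI)
    have : z - (u : ℤ) * B - (s : ℤ) * ((a : ℤ) : OK m) - z = -((u : ℤ) * B + (s : ℤ) * ((a : ℤ) : OK m)) := by ring
    rw [this]
    exact I.neg_mem hmem
  have hcard : Nat.card ((OK m) ⧸ I) = Nat.card (ZMod a.toNat × ZMod c.toNat) :=
    Nat.card_congr (Equiv.ofBijective f ⟨hinj, hsurj⟩).symm
  rw [hcard, Nat.card_prod, Nat.card_zmod, Nat.card_zmod]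
  push_cast
  rw [Int.toNat_of_nonneg ha.le, Int.toNat_of_nonneg hc.le]


lemma even_sym_sum {N : ℕ} (n : Fin N → Fin N → ℤ) (hsym : ∀ i j, n i j = n j i)
    (hdiag : ∀ i, Even (n i i)) : Even (∑ i, ∑ j, n i j) := by
  rw [even_iff_two_dvd]
  have h2 : ((∑ i, ∑ j, n i j : ℤ) : ZMod 2) = 0 := by
    push_cast
    rw [← Finset.sum_product' (f := fun i j => ((n i j : ℤ) : ZMod 2))]
    rw [← Finset.diag_union_offDiag (Finset.univ : Finset (Fin N)),
      Finset.sum_union (Finset.disjoint_diag_offDiag _), Finset.sum_diag]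
    have h20 : (2 : ZMod 2) = 0 := rfl
    have hd : (∑ i : Fin N, ((n i i : ℤ) : ZMod 2)) = 0 := by
      apply Finset.sum_eq_zero
      intro i _
      obtain ⟨k, hk⟩ := hdiag i
      rw [hk]
      push_cast
      rw [← two_mul, h20, zero_mul]
    have ho : (∑ p ∈ (Finset.univ : Finset (Fin N)).offDiag, ((n p.1 p.2 : ℤ) : ZMod 2)) = 0 := by
      apply Finset.sum_involution (fun p _ => Prod.swap p)
      · intro p _
        rw [hsym p.1 p.2]
        show ((n p.2 p.1 : ℤ) : ZMod 2) + ((n p.2 p.1 : ℤ) : ZMod 2) = 0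
        rw [← two_mul, h20, zero_mul]
      · intro p hp _ hcon
        have h1 : p.2 = p.1 := congrArg Prod.fst hcon
        exact (Finset.mem_offDiag.mp hp).2.2 h1.symm
      · intro p hp
        have h := Finset.mem_offDiag.mp hp
        exact Finset.mem_offDiag.mpr ⟨Finset.mem_univ _, Finset.mem_univ _, Ne.symm h.2.2⟩
      · intro p _; rfl
    rw [hd, ho, add_zero]
  exact_mod_cast (ZMod.intCast_zmod_eq_zero_iff_dvd _ 2).mp h2

/-- The key arithmetic lemma: `Ī I ⊆ N(I) O_K`. -/
lemma key (hm : 0 < m) (I : Ideal (OK m)) (hI : I ≠ ⊥) :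
    0 < idealNorm m I ∧
    ∀ x ∈ I, ∀ y ∈ I, ∃ u : OK m,
      (starRingEnd ℂ) ((x : OK m) : ℂ) * ((y : OK m) : ℂ) = (idealNorm m I : ℂ) * (u : ℂ) := by
  obtain ⟨H⟩ := exists_hnf hm I hI
  obtain ⟨a1, b1, k, ha1, hb1, hk⟩ := hnf_divs hm H
  have hcard : (idealNorm m I : ℤ) = H.a * H.c := hnf_card hm H
  have hpos : 0 < idealNorm m I := by
    have h1 : (0:ℤ) < (idealNorm m I : ℤ) := hcard ▸ mul_pos H.ha H.hc
    exact_mod_cast h1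
  refine ⟨hpos, ?_⟩
  intro x hx y hy
  obtain ⟨x0, x1, hxs⟩ := H.span x hx
  obtain ⟨y0, y1, hys⟩ := H.span y hy
  refine ⟨((x0 * y0 * a1 + x0 * y1 * b1 + x1 * y0 * (b1 + tpar m) + x1 * y1 * k : ℤ) : OK m)
      + ((x0 * y1 - x1 * y0 : ℤ) : OK m) * w m, ?_⟩
  have hconjx : (starRingEnd ℂ) ((x : OK m) : ℂ)
      = (x0 : ℂ) * (H.a : ℂ) + (x1 : ℂ) * ((H.b : ℂ) + (H.c : ℂ) * ((tpar m : ℂ) - omegaK m)) := by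
    rw [hxs, H.hBc]
    simp only [_root_.map_add, _root_.map_mul, _root_.map_intCast, conj_omega]
  have hn : (idealNorm m I : ℂ) = (H.a : ℂ) * (H.c : ℂ) := by
    exact_mod_cast congrArg (Int.cast : ℤ → ℂ) hcard
  have ha1' : (H.a : ℂ) = (H.c : ℂ) * (a1 : ℂ) := by exact_mod_cast congrArg (Int.cast : ℤ → ℂ) ha1
  have hb1' : (H.b : ℂ) = (H.c : ℂ) * (b1 : ℂ) := by exact_mod_cast congrArg (Int.cast : ℤ → ℂ) hb1
  have hk' : (b1 : ℂ)^2 + (tpar m : ℂ) * (b1 : ℂ) + (qpar m : ℂ) = (a1 : ℂ) * (k : ℂ) := by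
    exact_mod_cast congrArg (Int.cast : ℤ → ℂ) hk
  rw [hconjx, hys, H.hBc, hn]
  have hwc : ((w m : OK m) : ℂ) = omegaK m := rfl
  push_cast [hwc, ha1', hb1']
  linear_combination ((H.c : ℂ))^2 * (x1 : ℂ) * (y1 : ℂ) * hk'
    - ((H.c : ℂ))^2 * (x1 : ℂ) * (y1 : ℂ) * omega_sq


lemma hermForm_smul_smul {r : ℕ} (d e : ℂ) (x y : Fin r → ℂ) :
    hermForm (d • x) (e • y) = (starRingEnd ℂ) d * e * hermForm x y := by
  simp only [hermForm, Pi.smul_apply, smul_eq_mul, _root_.map_mul, Finset.mul_sum]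
  exact Finset.sum_congr rfl fun i _ => by ring

lemma hermForm_smul_right {r : ℕ} (e : ℂ) (x y : Fin r → ℂ) :
    hermForm x (e • y) = e * hermForm x y := by
  simpa using hermForm_smul_smul 1 e x y

lemma hermForm_conj {r : ℕ} (x y : Fin r → ℂ) :
    (starRingEnd ℂ) (hermForm x y) = hermForm y x := by
  unfold hermForm
  rw [_root_.map_sum]
  exact Finset.sum_congr rfl fun i _ => by
    rw [_root_.map_mul, Complex.conj_conj]; ring

lemma hermForm_sum_sum {r N : ℕ} (f g : Fin N → Fin r → ℂ) :
    hermForm (∑ i, f i) (∑ j, g j) = ∑ i, ∑ j, hermForm (f i) (g j) := by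
  unfold hermForm
  have h1 : ∀ t : Fin r, (starRingEnd ℂ) ((∑ i, f i) t) * ((∑ j, g j) t)
      = ∑ i, ∑ j, (starRingEnd ℂ) (f i t) * g j t := by
    intro t
    simp only [Finset.sum_apply, _root_.map_sum]
    rw [Finset.sum_mul_sum]
  rw [Finset.sum_congr rfl fun t _ => h1 t]
  rw [Finset.sum_comm]
  exact Finset.sum_congr rfl fun i _ => Finset.sum_comm

variable {m : ℕ}

lemma real_int (hm : 0 < m) (z : OK m) (h : (starRingEnd ℂ) (z : ℂ) = (z : ℂ)) :
    ∃ g : ℤ, (z : ℂ) = (g : ℂ) := by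
  obtain ⟨g0, g1, hg⟩ := mem_OK_iff.mp z.2
  have him : ((z : ℂ)).im = 0 := Complex.conj_eq_iff_im.mp h
  have e : ((g0 : ℂ) + (g1 : ℂ) * omegaK m).im = (g1 : ℝ) * (omegaK m).im := by
    simp [Complex.add_im, Complex.mul_im]
  rw [hg, e] at him
  have hg1 : g1 = 0 := by
    exact_mod_cast (mul_eq_zero.mp him).resolve_right (omega_im hm).ne'
  exact ⟨g0, by rw [hg, hg1]; push_cast; ring⟩


end SE

/-- if `Λ` is a theta lattice and `I` a nonzero ideal, then
`Λ' = (1/√N(I))·IΛ` is even: `h(λ',λ') ∈ 2ℤ` for all `λ' ∈ Λ'`. -/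
theorem scaledLattice_even (m r : ℕ) (hm : 0 < m) (hmsf : Squarefree m)
    (Λ : Set (Fin r → ℂ)) (hΛ : IsThetaLattice m r Λ)
    (I : Ideal (OK m)) (hI : I ≠ ⊥) :
    ∀ x ∈ scaledLattice m I Λ, ∃ k : ℤ, hermForm x x = 2 * (k : ℂ) := by
  obtain ⟨hpos, hdvd⟩ := SE.key hm I hI
  rintro x ⟨y, hy, rfl⟩
  obtain ⟨N, cf, v, hcf, hv, rfl⟩ := hy
  set n := idealNorm m I with hnn
  have hnC : ((n : ℕ) : ℂ) ≠ 0 := Nat.cast_ne_zero.mpr hpos.ne'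
  choose u hu using fun i j => hdvd (cf i) (hcf i) (cf j) (hcf j)
  set W : Fin N → Fin N → ℂ := fun i j => ((u i j : ℂ)) * hermForm (v i) (v j) with hW
  -- conj of u
  have hconjU : ∀ i j, (starRingEnd ℂ) ((u i j : ℂ)) = ((u j i : ℂ)) := by
    intro i j
    refine mul_left_cancel₀ hnC ?_
    calc (n : ℂ) * (starRingEnd ℂ) ((u i j : ℂ))
        = (starRingEnd ℂ) ((n : ℂ) * (u i j : ℂ)) := by rw [_root_.map_mul, _root_.map_natCast]
      _ = (starRingEnd ℂ) ((starRingEnd ℂ) ((cf i : ℂ)) * (cf j : ℂ)) := by rw [hu i j]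
      _ = (cf i : ℂ) * (starRingEnd ℂ) ((cf j : ℂ)) := by rw [_root_.map_mul, Complex.conj_conj]
      _ = (starRingEnd ℂ) ((cf j : ℂ)) * (cf i : ℂ) := by ring
      _ = (n : ℂ) * (u j i : ℂ) := hu j i
  have hconjW : ∀ i j, (starRingEnd ℂ) (W i j) = W j i := by
    intro i j
    rw [hW]
    simp only
    rw [_root_.map_mul, hconjU i j, SE.hermForm_conj]
  -- the main expansion
  have e4 : hermForm (((Real.sqrt n : ℝ) : ℂ)⁻¹ • ∑ i, (cf i : ℂ) • v i)
      (((Real.sqrt n : ℝ) : ℂ)⁻¹ • ∑ i, (cf i : ℂ) • v i) = ∑ i, ∑ j, W i j := by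
    rw [SE.hermForm_smul_smul]
    have e2 : ((starRingEnd ℂ) (((Real.sqrt n : ℝ)) : ℂ))⁻¹ * ((((Real.sqrt n : ℝ)) : ℂ))⁻¹
        = ((n : ℕ) : ℂ)⁻¹ := by
      rw [Complex.conj_ofReal, ← mul_inv, ← Complex.ofReal_mul,
        Real.mul_self_sqrt (Nat.cast_nonneg n), Complex.ofReal_natCast]
    rw [_root_.map_inv₀, e2]
    have e3 : hermForm (∑ i, (cf i : ℂ) • v i) (∑ i, (cf i : ℂ) • v i)
        = ∑ i, ∑ j, (n : ℂ) * W i j := by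
      rw [SE.hermForm_sum_sum]
      refine Finset.sum_congr rfl fun i _ => Finset.sum_congr rfl fun j _ => ?_
      rw [SE.hermForm_smul_smul, hu i j, hW]
      ring
    rw [e3, Finset.mul_sum]
    refine Finset.sum_congr rfl fun i _ => ?_
    rw [Finset.mul_sum]
    refine Finset.sum_congr rfl fun j _ => ?_
    rw [← mul_assoc, inv_mul_cancel₀ hnC, one_mul]
  -- integrality of real parts
  have hvdual : ∀ i, v i ∈ dualLattice Λ := fun i => by rw [hΛ.unimodular]; exact hv i
  have hWint : ∀ i j, ∃ kk : ℤ, (W i j).re = (kk : ℝ) := by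
    intro i j
    obtain ⟨kk, hkk⟩ := hvdual i _ (hΛ.toIsOKLattice.smul_mem (u i j) (v j) (hv j))
    refine ⟨kk, ?_⟩
    rw [SE.hermForm_smul_right] at hkk
    exact hkk
  choose nij hnij using hWint
  have hsym : ∀ i j, nij i j = nij j i := by
    intro i j
    have h1 : ((nij i j : ℝ)) = ((nij j i : ℝ)) := by
      rw [← hnij i j, ← hnij j i, ← hconjW i j, Complex.conj_re]
    exact_mod_cast h1
  have hdiag : ∀ i, Even (nij i i) := by
    intro i
    obtain ⟨g, hg⟩ := SE.real_int hm (u i i) (hconjU i i)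
    obtain ⟨ki, hki⟩ := hΛ.even (v i) (hv i)
    have hWii : W i i = ((2 * (g * ki) : ℤ) : ℂ) := by
      rw [hW]; simp only; rw [hg, hki]; push_cast; ring
    have h1 : ((nij i i : ℝ)) = ((2 * (g * ki) : ℤ) : ℝ) := by
      rw [← hnij i i, hWii]
      simp [Complex.intCast_re]
    have h2 : nij i i = 2 * (g * ki) := by exact_mod_cast h1
    exact ⟨g * ki, by rw [h2]; ring⟩
  -- S is the integer ∑∑ nij
  have hconjS : (starRingEnd ℂ) (∑ i, ∑ j, W i j) = ∑ i, ∑ j, W i j := by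
    rw [_root_.map_sum]
    rw [Finset.sum_congr rfl fun i _ => _root_.map_sum _ _ _]
    rw [Finset.sum_congr rfl fun i (_ : i ∈ Finset.univ) =>
      Finset.sum_congr rfl fun j (_ : j ∈ Finset.univ) => hconjW i j]
    exact Finset.sum_comm
  have hSre : (∑ i, ∑ j, W i j) = ((∑ i, ∑ j, nij i j : ℤ) : ℂ) := by
    have h1 : ((∑ i, ∑ j, W i j).re : ℂ) = ∑ i, ∑ j, W i j :=
      Complex.conj_eq_iff_re.mp hconjS
    rw [← h1]
    rw [Complex.re_sum]
    rw [Finset.sum_congr rfl fun i (_ : i ∈ Finset.univ) => Complex.re_sum Finset.univ _]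
    rw [Finset.sum_congr rfl fun i (_ : i ∈ Finset.univ) =>
      Finset.sum_congr rfl fun j (_ : j ∈ Finset.univ) => hnij i j]
    push_cast
    ring
  obtain ⟨K, hK⟩ := SE.even_sym_sum nij hsym hdiag
  refine ⟨K, ?_⟩
  rw [e4, hSre, hK]
  push_cast
  ring
end
end

section
/- Let Λ ⊆ ℂ^r be an O_K-lattice of rank r, n ≥ 1, and A = (1/u)·L with u ∈ ℂ \ {0}, L ∈ O_K^{n×n}, det A = 1 and I(L)^n = O_K·det(L). Then the set {X·A : X ∈ ℂ^{r×n} with every column in Λ} equals the set of all Y ∈ ℂ^{r×n} with every column in Λ* := (1/u)·I(L)Λ. -/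
noncomputable section

open Complex Matrix
open scoped ComplexOrder

section Aux

open scoped Pointwise

/-- Product of elements of an ideal lies in the corresponding power of the ideal. -/
lemma prod_mem_pow_card {R : Type*} [CommRing R] (I : Ideal R) {α : Type*} [DecidableEq α]
    (s : Finset α) (f : α → R) (h : ∀ i ∈ s, f i ∈ I) : ∏ i ∈ s, f i ∈ I ^ s.card := by
  induction s using Finset.induction_on with
  | empty => simp
  | @insert a s ha ih =>
    rw [Finset.prod_insert ha, Finset.card_insert_of_notMem ha, pow_succ']
    exact Ideal.mul_mem_mul (h a (Finset.mem_insert_self a s))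
      (ih fun i hi => h i (Finset.mem_insert_of_mem hi))

/-- The entries of the adjugate of `L` lie in `I(L)^(n-1)`. -/
lemma adjugate_entry_mem {m n : ℕ} (L : Matrix (Fin n) (Fin n) (OK m)) (i j : Fin n) :
    L.adjugate i j ∈ idealOf L ^ (n - 1) := by
  rw [Matrix.adjugate_apply, Matrix.det_apply']
  refine Ideal.sum_mem _ fun σ _ => Ideal.mul_mem_left _ _ ?_
  have hk0 : σ (σ⁻¹ j) = j := Equiv.apply_symm_apply σ j
  rw [← Finset.mul_prod_erase Finset.univ _ (Finset.mem_univ (σ⁻¹ j))]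
  have hcard : (Finset.univ.erase (σ⁻¹ j)).card = n - 1 := by
    rw [Finset.card_erase_of_mem (Finset.mem_univ _), Finset.card_univ, Fintype.card_fin]
  refine Ideal.mul_mem_left _ _ ?_
  rw [← hcard]
  refine prod_mem_pow_card _ _ _ fun k hk => ?_
  have hkne : σ k ≠ j := by
    intro hkj
    exact (Finset.mem_erase.mp hk).1 (by
      have : σ k = σ (σ⁻¹ j) := by rw [hkj, hk0]
      exact σ.injective this)
  rw [Matrix.updateRow_ne hkne]
  exact Ideal.subset_span ⟨(σ k, k), rfl⟩

end Aux

open scoped Pointwise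

/-- for an `O_K`-lattice `Λ` and `A = (1/u)L ∈ 𝒜`, the set `Λⁿ · A` of matrices
`X·A` with all columns of `X` in `Λ` equals the set of matrices with all columns in
`Λ* = (1/u)·I(L)Λ`. -/
theorem latticeTuples_mul_A (m r : ℕ) (hm : 0 < m) (hmsf : Squarefree m)
    (Λ : Set (Fin r → ℂ)) (hΛ : IsOKLattice m r Λ)
    (n : ℕ) (hn : 1 ≤ n) (u : ℂ) (hu : u ≠ 0)
    (L : Matrix (Fin n) (Fin n) (OK m))
    (hA : (u⁻¹ • matC L).det = 1)
    (hIL : idealOf L ^ n = Ideal.span {L.det}) :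
    { Y : Matrix (Fin r) (Fin n) ℂ | ∃ X ∈ latticeTuples Λ n, Y = X * (u⁻¹ • matC L) }
      = latticeTuples (smulSet u⁻¹ (idealMulSet m (idealOf L) Λ)) n := by
  classical
  -- `Λ` as an `O_K`-submodule of `ℂ^r`.
  have hsmul_eq : ∀ (c : OK m) (x : Fin r → ℂ), c • x = (c : ℂ) • x := by
    intro c x; ext i; simp [Subring.smul_def]
  set M : Submodule (OK m) (Fin r → ℂ) :=
    { carrier := Λ
      add_mem' := fun {x y} hx hy => hΛ.add_mem x hx y hy
      zero_mem' := hΛ.zero_mem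
      smul_mem' := fun c {x} hx => by
        show c • x ∈ Λ
        rw [hsmul_eq]
        exact hΛ.smul_mem c x hx } with hM
  set I : Ideal (OK m) := idealOf L with hIdef
  set d : OK m := L.det with hd
  -- the determinant of `matC L` equals `u ^ n` and is nonzero
  have hdet_matC : (matC L).det = (d : ℂ) := by
    have := RingHom.map_det ((OK m).subtype) L
    simpa [matC, RingHom.mapMatrix_apply, Matrix.map] using this.symm
  have hdC : (d : ℂ) ≠ 0 := by
    intro h0
    rw [Matrix.det_smul, hdet_matC, h0, mul_zero] at hA
    exact one_ne_zero hA.symm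
  -- `idealMulSet` is contained in `I • M`
  have factA : ∀ J : Ideal (OK m), ∀ s ∈ idealMulSet m J Λ, s ∈ J • M := by
    rintro J s ⟨N, c, v, hc, hv, rfl⟩
    refine Submodule.sum_mem _ fun k _ => ?_
    rw [← hsmul_eq]
    exact Submodule.smul_mem_smul (hc k) (hv k)
  ext Y
  constructor
  · rintro ⟨X, hX, rfl⟩
    intro j
    refine ⟨∑ k, ((L k j : ℂ)) • (fun i => X i k), ⟨n, fun k => L k j,
      fun k i => X i k, fun k => Ideal.subset_span ⟨(k, j), rfl⟩, fun k => hX k, rfl⟩, ?_⟩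
    funext i
    simp only [Pi.smul_apply, Finset.smul_sum, smul_eq_mul, Finset.sum_apply,
      Matrix.mul_apply, Matrix.smul_apply, matC, Matrix.map_apply]
    rw [Finset.mul_sum]
    exact Finset.sum_congr rfl fun k _ => by ring
  · intro hY
    set W : Matrix (Fin r) (Fin n) ℂ := u • Y with hW
    have hWcol : ∀ j, (fun i => W i j) ∈ (I • M : Submodule (OK m) (Fin r → ℂ)) := by
      intro j
      obtain ⟨s, hs, hcol⟩ := hY j
      have hWs : (fun i => W i j) = s := by
        funext i
        have := congrFun hcol i
        simp only [Pi.smul_apply, smul_eq_mul] at this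
        simp only [hW, Matrix.smul_apply, smul_eq_mul, ← this]
        field_simp
      rw [hWs]
      exact factA I s hs
    set X : Matrix (Fin r) (Fin n) ℂ := ((d : ℂ))⁻¹ • (W * matC L.adjugate) with hXdef
    have hXA : X * (u⁻¹ • matC L) = Y := by
      have hmap : matC (L.adjugate * L) = matC L.adjugate * matC L := by
        have := Matrix.map_mul (L := L.adjugate) (M := L) (f := (OK m).subtype)
        simpa [matC] using this
      have h1 : matC ((L.det) • (1 : Matrix (Fin n) (Fin n) (OK m)))
          = (d : ℂ) • (1 : Matrix (Fin n) (Fin n) ℂ) := by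
        ext k l
        by_cases hkl : k = l <;>
          simp [matC, Matrix.map_apply, Matrix.smul_apply, Matrix.one_apply, hkl, hd]
      calc X * (u⁻¹ • matC L) = u⁻¹ • (X * matC L) := by rw [Matrix.mul_smul]
        _ = u⁻¹ • (((d : ℂ))⁻¹ • (W * (matC L.adjugate * matC L))) := by
            rw [hXdef, Matrix.smul_mul, Matrix.mul_assoc]
        _ = Y := by
            rw [← hmap, Matrix.adjugate_mul, h1, Matrix.mul_smul, Matrix.mul_one, hW,
              smul_smul, smul_smul, smul_smul,
              show u⁻¹ * (d : ℂ)⁻¹ * (d : ℂ) * u = 1 by field_simp, one_smul]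
    refine ⟨X, ?_, hXA.symm⟩
    intro j
    -- column `j` of `X` lies in `Λ`
    set t : Fin r → ℂ := ∑ k, (L.adjugate k j) • (fun i => W i k) with ht
    have htmem : t ∈ (Ideal.span {d} : Ideal (OK m)) • M := by
      have h1 : t ∈ (I ^ (n - 1)) • ((I • M : Submodule (OK m) (Fin r → ℂ))) :=
        Submodule.sum_mem _ fun k _ =>
          Submodule.smul_mem_smul (adjugate_entry_mem L k j) (hWcol k)
      have hpow : I ^ (n - 1) * I = Ideal.span {d} := by
        rw [← pow_succ, Nat.sub_add_cancel hn, hIdef, hd, hIL]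
      rwa [← Submodule.smul_assoc (I ^ (n - 1)) I M, Ideal.smul_eq_mul, hpow] at h1
    rw [Submodule.ideal_span_singleton_smul, ← SetLike.mem_coe,
      Submodule.coe_pointwise_smul] at htmem
    obtain ⟨lam, hlam, hdlam⟩ := Set.mem_smul_set.mp htmem
    have hcolX : (fun i => X i j) = ((d : ℂ))⁻¹ • t := by
      funext i
      simp only [ht, hXdef, Matrix.smul_apply, Matrix.mul_apply, smul_eq_mul,
        Finset.sum_apply, Pi.smul_apply, hsmul_eq]
      congr 1
      exact Finset.sum_congr rfl fun k _ => by
        simp [matC, Matrix.map_apply, mul_comm]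
    have hdl : (d : ℂ) • lam = t := by rw [← hsmul_eq]; exact hdlam
    have : (fun i => X i j) = lam := by
      rw [hcolX, ← hdl, smul_smul, inv_mul_cancel₀ hdC, one_smul]
    rw [this]
    exact hlam
end
end

section
/- Let d be a squarefree positive divisor of |d_K| and V_d an Atkin–Lehner matrix. Then for every Hermitian T ∈ ℂ^{2×2}: T ∈ Λ(2,O_K) if and only if T' := T[V_d] = V_dᴴ T V_d ∈ Λ(2,O_K). Moreover, if T ∈ Λ(2,O_K) and T ≠ 0, then ε(T) = ε(T'). -/
noncomputable section

open Complex Matrix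
open scoped ComplexOrder

lemma sqrt_nat_sq (n : ℕ) : ((Real.sqrt n : ℝ) : ℂ)^2 = (n:ℂ) := by
  rw [← Complex.ofReal_pow, Real.sq_sqrt (by positivity)]; norm_num

lemma sqrtNegM_sq (m : ℕ) : (sqrtNegM m) ^ 2 = -(m : ℂ) := by
  rw [sqrtNegM, mul_pow, Complex.I_sq, sqrt_nat_sq]; ring

lemma sqrtNegM_ne (m : ℕ) (hm : 0 < m) : sqrtNegM m ≠ 0 := by
  rw [sqrtNegM]
  have : Real.sqrt m ≠ 0 := by positivity
  simp [Complex.I_ne_zero, this, Complex.ofReal_ne_zero]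

lemma conj_sqrtNegM (m : ℕ) : (starRingEnd ℂ) (sqrtNegM m) = -sqrtNegM m := by
  simp [sqrtNegM]

lemma sqrtdK_eq (m : ℕ) (h : m % 4 = 3) : sqrtdK m = sqrtNegM m := by
  rw [sqrtdK, sqrtNegM, dKabs, if_pos h]

lemma sqrtdK_eq' (m : ℕ) (h : ¬ m % 4 = 3) : sqrtdK m = 2 * sqrtNegM m := by
  rw [sqrtdK, sqrtNegM, dKabs, if_neg h]
  push_cast
  rw [show ((4:ℝ) * m) = 2^2 * m by norm_num, Real.sqrt_mul (by positivity),
    Real.sqrt_sq (by norm_num : (0:ℝ) ≤ 2)]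
  push_cast; ring

lemma sqrtdK_ne (m : ℕ) (hm : 0 < m) : sqrtdK m ≠ 0 := by
  by_cases h : m % 4 = 3
  · rw [sqrtdK_eq m h]; exact sqrtNegM_ne m hm
  · rw [sqrtdK_eq' m h]; exact mul_ne_zero two_ne_zero (sqrtNegM_ne m hm)

lemma conj_sqrtdK (m : ℕ) : (starRingEnd ℂ) (sqrtdK m) = -sqrtdK m := by
  simp [sqrtdK]

lemma omegaK_eq (m : ℕ) (h : m % 4 = 3) : omegaK m = (1 + sqrtNegM m) / 2 := by
  rw [omegaK, if_pos h, sqrtNegM]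

lemma omegaK_eq' (m : ℕ) (h : ¬ m % 4 = 3) : omegaK m = sqrtNegM m := by
  rw [omegaK, if_neg h, sqrtNegM]

lemma exists_omega_rel (m : ℕ) : ∃ c₀ c₁ : ℤ, omegaK m ^ 2 = (c₀ : ℂ) + (c₁ : ℂ) * omegaK m := by
  have hs := sqrtNegM_sq m
  by_cases h : m % 4 = 3
  · obtain ⟨j, hj⟩ : (4:ℤ) ∣ ((m:ℤ) + 1) := by omega
    refine ⟨-j, 1, ?_⟩
    rw [omegaK_eq m h]
    have : ((m:ℂ) + 1) = 4 * (j:ℂ) := by exact_mod_cast congrArg (Int.cast : ℤ → ℂ) hj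
    push_cast
    linear_combination hs/4 - this/4
  · exact ⟨-(m:ℤ), 0, by rw [omegaK_eq' m h]; push_cast; linear_combination hs⟩

lemma mem_OK_iff {m : ℕ} {z : ℂ} : z ∈ OK m ↔ ∃ p q : ℤ, z = (p:ℂ) + (q:ℂ) * omegaK m := by
  constructor
  · intro hz
    obtain ⟨c₀, c₁, hrel⟩ := exists_omega_rel m
    let S : Subring ℂ :=
      { carrier := {z | ∃ p q : ℤ, z = (p:ℂ) + (q:ℂ) * omegaK m}
        one_mem' := ⟨1, 0, by push_cast; ring⟩
        zero_mem' := ⟨0, 0, by push_cast; ring⟩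
        add_mem' := by
          rintro x y ⟨p, q, rfl⟩ ⟨p', q', rfl⟩
          exact ⟨p + p', q + q', by push_cast; ring⟩
        neg_mem' := by
          rintro x ⟨p, q, rfl⟩
          exact ⟨-p, -q, by push_cast; ring⟩
        mul_mem' := by
          rintro x y ⟨p, q, rfl⟩ ⟨p', q', rfl⟩
          exact ⟨p * p' + q * q' * c₀, p * q' + q * p' + q * q' * c₁, by
            push_cast; linear_combination ((q:ℂ) * q') * hrel⟩ }
    have hle : OK m ≤ S := by
      rw [OK, Subring.closure_le]
      rintro x rfl
      exact ⟨0, 1, by push_cast; ring⟩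
    exact hle hz
  · rintro ⟨p, q, rfl⟩
    have hω : omegaK m ∈ OK m := Subring.subset_closure rfl
    exact add_mem (intCast_mem _ p) (mul_mem (intCast_mem _ q) hω)

lemma sqrtNegM_mem_OK (m : ℕ) : sqrtNegM m ∈ OK m := by
  by_cases h : m % 4 = 3
  · rw [mem_OK_iff]
    exact ⟨-1, 2, by rw [omegaK_eq m h]; push_cast; ring⟩
  · rw [← omegaK_eq' m h]; exact Subring.subset_closure rfl

lemma conj_mem_OK {m : ℕ} {z : ℂ} (hz : z ∈ OK m) : (starRingEnd ℂ) z ∈ OK m := by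
  rw [mem_OK_iff] at hz ⊢
  obtain ⟨p, q, rfl⟩ := hz
  by_cases h : m % 4 = 3
  · refine ⟨p + q, -q, ?_⟩
    rw [omegaK_eq m h]
    simp only [_root_.map_add, _root_.map_mul, _root_.map_div₀, _root_.map_one, _root_.map_intCast, _root_.map_ofNat, conj_sqrtNegM]
    push_cast; ring
  · refine ⟨p, -q, ?_⟩
    rw [omegaK_eq' m h]
    simp only [_root_.map_add, _root_.map_mul, _root_.map_intCast, conj_sqrtNegM]
    push_cast; ring
lemma okstar_add {m : ℕ} {t₁ t₂ : ℂ} (h₁ : t₁ ∈ OKstar m) (h₂ : t₂ ∈ OKstar m) :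
    t₁ + t₂ ∈ OKstar m := by
  obtain ⟨a, ha, rfl⟩ := h₁; obtain ⟨b, hb, rfl⟩ := h₂
  exact ⟨a + b, add_mem ha hb, by rw [← add_div]⟩

lemma okstar_okmul {m : ℕ} {a t : ℂ} (ha : a ∈ OK m) (ht : t ∈ OKstar m) :
    a * t ∈ OKstar m := by
  obtain ⟨b, hb, rfl⟩ := ht
  exact ⟨a * b, mul_mem ha hb, (mul_div_assoc a b _).symm⟩

lemma okstar_intmul {m : ℕ} (n : ℤ) {t : ℂ} (ht : t ∈ OKstar m) :
    (n : ℂ) * t ∈ OKstar m := okstar_okmul (intCast_mem _ n) ht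

lemma okstar_conj {m : ℕ} (hm : 0 < m) {t : ℂ} (ht : t ∈ OKstar m) :
    (starRingEnd ℂ) t ∈ OKstar m := by
  obtain ⟨a, ha, rfl⟩ := ht
  refine ⟨-((starRingEnd ℂ) a), neg_mem (conj_mem_OK ha), ?_⟩
  rw [_root_.map_div₀, conj_sqrtdK]
  ring

lemma okstar_mps {m : ℕ} (hm : 0 < m) : (m : ℂ) + sqrtNegM m ∈ OKstar m := by
  refine ⟨((-2*(m:ℤ) : ℤ) : ℂ) + ((2*(m:ℤ) : ℤ) : ℂ) * omegaK m,
    mem_OK_iff.mpr ⟨-2*(m:ℤ), 2*(m:ℤ), rfl⟩, ?_⟩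
  rw [eq_div_iff (sqrtdK_ne m hm)]
  have hs := sqrtNegM_sq m
  by_cases h : m % 4 = 3
  · rw [sqrtdK_eq m h, omegaK_eq m h]
    push_cast
    linear_combination hs
  · rw [sqrtdK_eq' m h, omegaK_eq' m h]
    push_cast
    linear_combination (2:ℂ) * hs

/-- key integrality: for `t ∈ O_K^⋆`, `t(m - √-m) + t̄(m + √-m)` is a rational integer. -/
lemma okstar_trace {m : ℕ} (hm : 0 < m) {t : ℂ} (ht : t ∈ OKstar m) :
    ∃ g : ℤ, t * ((m:ℂ) - sqrtNegM m) + (starRingEnd ℂ) t * ((m:ℂ) + sqrtNegM m) = (g : ℂ) := by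
  obtain ⟨a, ha, rfl⟩ := ht
  obtain ⟨p, q, rfl⟩ := mem_OK_iff.mp ha
  have hs := sqrtNegM_sq m
  have hsne := sqrtNegM_ne m hm
  have hconj : ∀ z : ℂ, (starRingEnd ℂ) (((p:ℂ) + (q:ℂ) * z) / sqrtdK m)
      = ((p:ℂ) + (q:ℂ) * (starRingEnd ℂ) z) / (-(sqrtdK m)) := by
    intro z; rw [_root_.map_div₀, conj_sqrtdK]; push_cast; simp
  by_cases h : m % 4 = 3
  · refine ⟨q * m - q - 2 * p, ?_⟩
    rw [hconj, sqrtdK_eq m h, omegaK_eq m h]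
    simp only [_root_.map_div₀, _root_.map_add, _root_.map_one, _root_.map_ofNat, conj_sqrtNegM]
    field_simp
    push_cast
    linear_combination (0:ℂ) * hs
  · refine ⟨q * m - p, ?_⟩
    rw [hconj, sqrtdK_eq' m h, omegaK_eq' m h, conj_sqrtNegM]
    field_simp
    push_cast
    linear_combination (0:ℂ) * hs
lemma sqfree_dvd_of_prime_dvd {d n : ℕ} (hn : n ≠ 0) (hd : Squarefree d)
    (h : ∀ p, p.Prime → p ∣ d → p ∣ n) : d ∣ n := by
  have hd0 : d ≠ 0 := by rintro rfl; exact not_squarefree_zero hd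
  rw [← Nat.factorization_le_iff_dvd hd0 hn]
  intro p
  by_cases hp : p.Prime ∧ p ∣ d
  · calc d.factorization p ≤ 1 := hd.natFactorization_le_one p
      _ ≤ n.factorization p := (hp.1.factorization_pos_of_dvd hn (h p hp.1 hp.2))
  · have : d.factorization p = 0 := by
      rcases not_and_or.mp hp with h' | h'
      · exact Nat.factorization_eq_zero_of_not_prime d h'
      · simp [Nat.factorization_eq_zero_of_not_dvd h']
    simp [this]

lemma dvd_helper {m d : ℕ} (hm : 0 < m) (hdsf : Squarefree d) (hdd : d ∣ dKabs m) :
    d ∣ 2 * m ∧ d ∣ m * (m + 1) ∧ d ∣ m * (m - 1) := by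
  have key : ∀ p, p.Prime → p ∣ d → p ∣ m ∨ p = 2 := by
    intro p hp hpd
    have h4 : p ∣ dKabs m := hpd.trans hdd
    rw [dKabs] at h4
    split_ifs at h4 with h
    · exact Or.inl h4
    · rcases (Nat.Prime.dvd_mul hp).mp h4 with h' | h'
      · refine Or.inr ((Nat.prime_dvd_prime_iff_eq hp Nat.prime_two).mp ?_)
        have h4' : p ∣ 2 * 2 := by simpa [show (4:ℕ) = 2*2 by norm_num] using h'
        rcases (Nat.Prime.dvd_mul hp).mp h4' with h'' | h'' <;> exact h''
      · exact Or.inl h'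
  refine ⟨?_, ?_, ?_⟩
  · refine sqfree_dvd_of_prime_dvd (by positivity) hdsf ?_
    intro p hp hpd
    rcases key p hp hpd with h | rfl
    · exact h.mul_left 2
    · exact ⟨m, rfl⟩
  · refine sqfree_dvd_of_prime_dvd (by positivity) hdsf ?_
    intro p hp hpd
    rcases key p hp hpd with h | rfl
    · exact h.mul_right _
    · exact (Nat.even_mul_succ_self m).two_dvd
  · rcases eq_or_ne m 1 with rfl | hne
    · simp
    · refine sqfree_dvd_of_prime_dvd (Nat.mul_ne_zero (by omega) (by omega)) hdsf ?_
      intro p hp hpd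
      rcases key p hp hpd with h | rfl
      · exact h.mul_right _
      · rcases Nat.even_or_odd m with he | ho
        · exact (he.mul_right _).two_dvd
        · have hev : Even (m - 1) := Nat.Odd.sub_odd ho odd_one
          exact (hev.mul_left _).two_dvd

open Matrix in
lemma lambda_fwd (m : ℕ) (hm : 0 < m) (d : ℕ) (hd : 0 < d) (hdsf : Squarefree d)
    (hdd : d ∣ dKabs m) (V : Matrix (Fin 2) (Fin 2) ℂ) (hV : IsAtkinLehner m d V)
    (T : Matrix (Fin 2) (Fin 2) ℂ) (hL : inLambda2 m T) : inLambda2 m (Vᴴ * T * V) := by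
  obtain ⟨hTh, ⟨k, hk⟩, ⟨l, hl⟩, ht⟩ := hL
  obtain ⟨-, a, b, c, e, hVeq⟩ := hV
  have hs := sqrtNegM_sq m
  set s := sqrtNegM m with hs_def
  have hs_conj : (starRingEnd ℂ) s = -s := by rw [hs_def]; exact conj_sqrtNegM m
  obtain ⟨n3', hn3⟩ := (dvd_helper hm hdsf hdd).1
  obtain ⟨n1', hn1⟩ := (dvd_helper hm hdsf hdd).2.1
  obtain ⟨n2', hn2⟩ := (dvd_helper hm hdsf hdd).2.2
  have hdC : (d:ℂ) ≠ 0 := Nat.cast_ne_zero.mpr hd.ne'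
  have hn1C : (m:ℂ) * ((m:ℂ) + 1) = (d:ℂ) * (n1' : ℂ) := by exact_mod_cast congrArg (Nat.cast : ℕ → ℂ) hn1
  have hn3C : 2 * (m:ℂ) = (d:ℂ) * (n3' : ℂ) := by exact_mod_cast congrArg (Nat.cast : ℕ → ℂ) hn3
  have hn2C : (m:ℂ) * ((m:ℂ) - 1) = (d:ℂ) * (n2' : ℂ) := by
    have h' := congrArg (Nat.cast : ℕ → ℂ) hn2
    push_cast [Nat.cast_sub hm] at h'
    exact h'
  set t := T 0 1 with ht_def
  have h10 : T 1 0 = (starRingEnd ℂ) t := by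
    conv_lhs => rw [← hTh]
    simp [Matrix.conjTranspose_apply, ht_def]
  obtain ⟨g, hg⟩ := okstar_trace hm ht
  set rd : ℂ := ((Real.sqrt d : ℝ) : ℂ) with hrd_def
  have hrd2 : rd * rd = (d:ℂ) := by rw [← sq]; exact sqrt_nat_sq d
  set A : Matrix (Fin 2) (Fin 2) ℂ :=
    !![(a:ℂ)*(d:ℂ), (c:ℂ)*((m:ℂ)+s); (b:ℂ)*((m:ℂ)-s), (e:ℂ)*(d:ℂ)] with hA_def
  set B : Matrix (Fin 2) (Fin 2) ℂ :=
    !![(a:ℂ)*(d:ℂ), (b:ℂ)*((m:ℂ)+s); (c:ℂ)*((m:ℂ)-s), (e:ℂ)*(d:ℂ)] with hB_def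
  have hVB : V = rd⁻¹ • B := hVeq
  have hVH : Vᴴ = rd⁻¹ • A := by
    rw [hVeq]
    rw [Matrix.conjTranspose_smul]
    have hstar : star (rd⁻¹) = rd⁻¹ := by
      rw [star_inv₀]; norm_num [hrd_def]
    rw [hstar]
    congr 1
    ext i j
    rw [Matrix.conjTranspose_apply]
    fin_cases i <;> fin_cases j <;>
      simp [hA_def, hB_def, Complex.star_def, _root_.map_mul, _root_.map_add, _root_.map_sub,
          _root_.map_intCast, _root_.map_natCast, hs_conj, Fin.zero_eta, Fin.mk_one] <;>
      (first | ring1 | tauto)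
  have hT' : Vᴴ * T * V = (d:ℂ)⁻¹ • (A * T * B) := by
    rw [hVH, hVB, Matrix.smul_mul, Matrix.mul_smul, Matrix.smul_mul, smul_smul, ← mul_inv, hrd2]
  have hE : ∀ i j, (Vᴴ * T * V) i j = (d:ℂ)⁻¹ * ((A * T * B) i j) := by
    intro i j; rw [hT']; simp
  have herm : (Vᴴ * T * V)ᴴ = Vᴴ * T * V := by
    simp [Matrix.conjTranspose_mul, Matrix.mul_assoc, hTh]
  refine ⟨herm, ⟨k*a^2*(d:ℤ) + a*c*g + c^2*l*(n1':ℤ), ?_⟩,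
    ⟨k*b^2*(n1':ℤ) + b*e*g + e^2*l*(d:ℤ), ?_⟩, ?_⟩
  · rw [hE 0 0]
    have : (A * T * B) 0 0 = (d:ℂ) * ((k:ℂ)*(a:ℂ)^2*(d:ℂ) + (a:ℂ)*(c:ℂ)*(g:ℂ) + (c:ℂ)^2*(l:ℂ)*(n1':ℂ)) := by
      simp only [hA_def, hB_def, Matrix.mul_apply, Fin.sum_univ_two]
      simp [hk, hl, h10, ← ht_def]
      linear_combination ((a:ℂ)*c*(d:ℂ)) * hg + ((c:ℂ)^2*(l:ℂ)) * hn1C - ((c:ℂ)^2*(l:ℂ)) * hs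
    rw [this, ← mul_assoc, inv_mul_cancel₀ hdC, one_mul]
    push_cast; ring
  · rw [hE 1 1]
    have : (A * T * B) 1 1 = (d:ℂ) * ((k:ℂ)*(b:ℂ)^2*(n1':ℂ) + (b:ℂ)*(e:ℂ)*(g:ℂ) + (e:ℂ)^2*(l:ℂ)*(d:ℂ)) := by
      simp only [hA_def, hB_def, Matrix.mul_apply, Fin.sum_univ_two]
      simp [hk, hl, h10, ← ht_def]
      linear_combination ((b:ℂ)*e*(d:ℂ)) * hg + ((k:ℂ)*(b:ℂ)^2) * hn1C - ((k:ℂ)*(b:ℂ)^2) * hs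
    rw [this, ← mul_assoc, inv_mul_cancel₀ hdC, one_mul]
    push_cast; ring
  · have h01 : (Vᴴ * T * V) 0 1 =
        ((k*a*b : ℤ):ℂ) * ((m:ℂ) + s) + ((a*e*(d:ℤ) : ℤ):ℂ) * t
          + (((b*c : ℤ):ℂ) * ((n2':ℂ) + (n3':ℂ)*s)) * ((starRingEnd ℂ) t)
          + ((c*e*l : ℤ):ℂ) * ((m:ℂ) + s) := by
      rw [hE 0 1]
      have : (A * T * B) 0 1 = (d:ℂ) * (((k*a*b : ℤ):ℂ) * ((m:ℂ) + s) + ((a*e*(d:ℤ) : ℤ):ℂ) * t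
          + (((b*c : ℤ):ℂ) * ((n2':ℂ) + (n3':ℂ)*s)) * ((starRingEnd ℂ) t)
          + ((c*e*l : ℤ):ℂ) * ((m:ℂ) + s)) := by
        simp only [hA_def, hB_def, Matrix.mul_apply, Fin.sum_univ_two]
        simp [hk, hl, h10, ← ht_def]
        push_cast
        linear_combination ((b:ℂ)*c*((starRingEnd ℂ) t)) * hn2C + ((b:ℂ)*c*((starRingEnd ℂ) t)*s) * hn3C + ((b:ℂ)*(c:ℂ)*((starRingEnd ℂ) t)) * hs
      rw [this, ← mul_assoc, inv_mul_cancel₀ hdC, one_mul]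
    rw [h01]
    refine okstar_add (okstar_add (okstar_add ?_ ?_) ?_) ?_
    · exact okstar_intmul _ (okstar_mps hm)
    · exact okstar_intmul _ ht
    · refine okstar_okmul ?_ (okstar_conj hm ht)
      exact mul_mem (intCast_mem _ _)
        (add_mem (natCast_mem _ n2') (mul_mem (natCast_mem _ n3') (sqrtNegM_mem_OK m)))
    · exact okstar_intmul _ (okstar_mps hm)
open Matrix in
lemma atkinLehner_inv (m d : ℕ) (hm : 0 < m) (hd : 0 < d) (V : Matrix (Fin 2) (Fin 2) ℂ)
    (hV : IsAtkinLehner m d V) :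
    ∃ W : Matrix (Fin 2) (Fin 2) ℂ, IsAtkinLehner m d W ∧ W * V = 1 ∧ V * W = 1 := by
  obtain ⟨hdet, a, b, c, e, hVeq⟩ := hV
  have hs := sqrtNegM_sq m
  set s := sqrtNegM m with hs_def
  set rd : ℂ := ((Real.sqrt d : ℝ) : ℂ) with hrd_def
  have hrd2 : rd * rd = (d:ℂ) := by rw [← sq]; exact sqrt_nat_sq d
  set W : Matrix (Fin 2) (Fin 2) ℂ := rd⁻¹ •
    !![((e:ℤ):ℂ)*(d:ℂ), ((-b : ℤ):ℂ)*((m:ℂ)+s); ((-c:ℤ):ℂ)*((m:ℂ)-s), ((a:ℤ):ℂ)*(d:ℂ)]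
    with hW_def
  have hdetV : rd⁻¹ ^ 2 * (((a:ℂ)*(d:ℂ)) * ((e:ℂ)*(d:ℂ))
      - ((b:ℂ)*((m:ℂ)+s)) * ((c:ℂ)*((m:ℂ)-s))) = 1 := by
    have h' := hdet
    rw [hVeq, Matrix.det_smul, Matrix.det_fin_two_of] at h'
    simpa using h'
  have hdetW : W.det = 1 := by
    rw [hW_def, Matrix.det_smul, Matrix.det_fin_two_of]
    push_cast
    simp only [Fintype.card_fin]
    linear_combination hdetV
  refine ⟨W, ⟨hdetW, e, -b, -c, a, hW_def⟩, ?_, ?_⟩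
  · rw [hW_def, hVeq, Matrix.smul_mul, Matrix.mul_smul, smul_smul]
    ext i j
    fin_cases i <;> fin_cases j <;>
      simp [Matrix.mul_apply, Fin.sum_univ_two, Matrix.one_apply, Matrix.smul_apply,
        smul_eq_mul, Fin.zero_eta, Fin.mk_one] <;>
      push_cast
    · linear_combination hdetV
    · exact Or.inr (by ring)
    · exact Or.inr (by ring)
    · linear_combination hdetV
  · rw [hW_def, hVeq, Matrix.smul_mul, Matrix.mul_smul, smul_smul]
    ext i j
    fin_cases i <;> fin_cases j <;>
      simp [Matrix.mul_apply, Fin.sum_univ_two, Matrix.one_apply, Matrix.smul_apply,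
        smul_eq_mul, Fin.zero_eta, Fin.mk_one] <;>
      push_cast
    · linear_combination hdetV
    · exact Or.inr (by ring)
    · exact Or.inr (by ring)
    · linear_combination hdetV

open Matrix in
lemma lambda_iff (m : ℕ) (hm : 0 < m) (d : ℕ) (hd : 0 < d) (hdsf : Squarefree d)
    (hdd : d ∣ dKabs m) (V : Matrix (Fin 2) (Fin 2) ℂ) (hV : IsAtkinLehner m d V)
    (T : Matrix (Fin 2) (Fin 2) ℂ) (hT : Tᴴ = T) :
    inLambda2 m T ↔ inLambda2 m (Vᴴ * T * V) := by
  constructor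
  · exact lambda_fwd m hm d hd hdsf hdd V hV T
  · intro h
    obtain ⟨W, hW, hWV, hVW⟩ := atkinLehner_inv m d hm hd V hV
    have h2 := lambda_fwd m hm d hd hdsf hdd W hW _ h
    have heq : Wᴴ * (Vᴴ * T * V) * W = T := by
      have hassoc : Wᴴ * (Vᴴ * T * V) * W = (Wᴴ * Vᴴ) * (T * (V * W)) := by
        simp only [Matrix.mul_assoc]
      rw [hassoc, ← Matrix.conjTranspose_mul, hVW, Matrix.conjTranspose_one,
        Matrix.one_mul, Matrix.mul_one]
    rwa [heq] at h2

/-- for a squarefree positive divisor `d` of `|d_K|` and an Atkin-Lehner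
matrix `V_d`, a Hermitian `T` lies in `Λ(2,O_K)` iff `T' = T[V_d] = V_dᴴ T V_d` does;
moreover `ε(T) = ε(T')` for nonzero `T ∈ Λ(2,O_K)`. -/
theorem lambda2_atkinLehner (m : ℕ) (hm : 0 < m) (hmsf : Squarefree m)
    (d : ℕ) (hd : 0 < d) (hdsf : Squarefree d) (hdd : d ∣ dKabs m)
    (V : Matrix (Fin 2) (Fin 2) ℂ) (hV : IsAtkinLehner m d V)
    (T : Matrix (Fin 2) (Fin 2) ℂ) (hT : Tᴴ = T) :
    (inLambda2 m T ↔ inLambda2 m (Vᴴ * T * V)) ∧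
    (inLambda2 m T → T ≠ 0 → eps m T = eps m (Vᴴ * T * V)) := by
  refine ⟨lambda_iff m hm d hd hdsf hdd V hV T hT, ?_⟩
  intro _ _
  have hsets : {q : ℕ | 0 < q ∧ inLambda2 m ((q:ℂ)⁻¹ • T)}
      = {q : ℕ | 0 < q ∧ inLambda2 m ((q:ℂ)⁻¹ • (Vᴴ * T * V))} := by
    ext q
    simp only [Set.mem_setOf_eq]
    refine and_congr_right fun hq => ?_
    have hTq : ((q:ℂ)⁻¹ • T)ᴴ = (q:ℂ)⁻¹ • T := by
      rw [Matrix.conjTranspose_smul, hT]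
      congr 1
      simp
    have hsc : Vᴴ * ((q:ℂ)⁻¹ • T) * V = (q:ℂ)⁻¹ • (Vᴴ * T * V) := by
      rw [Matrix.mul_smul, Matrix.smul_mul]
    rw [← hsc]
    exact lambda_iff m hm d hd hdsf hdd V hV _ hTq
  unfold eps
  rw [hsets]
end
end

section
/- Let d be a squarefree positive divisor of m. Let V_d = (1/√d)·(α d, β(m+√−m); γ(m−√−m), δ d) with α, β, γ, δ ∈ ℤ and det V_d = 1, and let V_d' = (1/√d)·(α' d, β'·√−m; −γ'·√−m, δ' d) with α', β', γ', δ' ∈ ℤ and det V_d' = 1. Then the product V_d·V_d' has all entries in O_K and determinant 1, i.e. V_d·V_d' ∈ SL₂(O_K). -/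
noncomputable section

open Complex Matrix
open scoped ComplexOrder

lemma mem_OK_of_int (m : ℕ) (x y : ℤ) : (x : ℂ) + (y : ℂ) * sqrtNegM m ∈ OK m :=
  add_mem (intCast_mem _ x) (mul_mem (intCast_mem _ y) (sqrtNegM_mem_OK m))


/-- for a squarefree positive divisor `d` of `m`, the product `V_d · V_d'` of
the two kinds of Atkin-Lehner type matrices has entries in `O_K` and determinant `1`,
i.e. `V_d · V_d' ∈ SL₂(O_K)`. -/
theorem atkinLehner_mul_mem_SL2 (m : ℕ) (hm : 0 < m) (hmsf : Squarefree m)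
    (d : ℕ) (hd : 0 < d) (hdsf : Squarefree d) (hdm : d ∣ m)
    (a b c e a' b' c' e' : ℤ) (V V' : Matrix (Fin 2) (Fin 2) ℂ)
    (hV : V = ((Real.sqrt d : ℂ))⁻¹ •
      !![(a : ℂ) * d, (b : ℂ) * ((m : ℂ) + sqrtNegM m);
         (c : ℂ) * ((m : ℂ) - sqrtNegM m), (e : ℂ) * d])
    (hdetV : V.det = 1)
    (hV' : V' = ((Real.sqrt d : ℂ))⁻¹ •
      !![(a' : ℂ) * d, (b' : ℂ) * sqrtNegM m;
         -((c' : ℂ) * sqrtNegM m), (e' : ℂ) * d])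
    (hdetV' : V'.det = 1) :
    (∀ i j, (V * V') i j ∈ OK m) ∧ (V * V').det = 1 := by
  have hd0 : (d : ℂ) ≠ 0 := Nat.cast_ne_zero.mpr hd.ne'
  have hsd : ((Real.sqrt d : ℂ)) * ((Real.sqrt d : ℂ)) = (d : ℂ) := by
    norm_cast
    exact Real.mul_self_sqrt (by positivity)
  have hkey : ∀ p q : ℂ, ((Real.sqrt d : ℂ))⁻¹ * p * (((Real.sqrt d : ℂ))⁻¹ * q)
      = (d : ℂ)⁻¹ * (p * q) := by
    intro p q
    rw [← hsd, mul_inv]; ring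
  obtain ⟨m₁, hm₁⟩ := hdm
  have hmc : (m : ℂ) = (d : ℂ) * (m₁ : ℂ) := by exact_mod_cast congrArg (Nat.cast : ℕ → ℂ) hm₁
  have hs2 : sqrtNegM m * sqrtNegM m = -(m : ℂ) := by
    simp only [sqrtNegM]
    have : (Real.sqrt m : ℂ) * (Real.sqrt m : ℂ) = (m : ℂ) := by
      norm_cast; exact Real.mul_self_sqrt (by positivity)
    rw [show Complex.I * (Real.sqrt m : ℂ) * (Complex.I * (Real.sqrt m : ℂ))
        = Complex.I * Complex.I * ((Real.sqrt m : ℂ) * (Real.sqrt m : ℂ)) by ring,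
      Complex.I_mul_I, this]
    ring
  subst hV hV'
  refine ⟨?_, by rw [Matrix.det_mul, hdetV, hdetV', one_mul]⟩
  intro i j
  fin_cases i <;> fin_cases j <;>
    simp only [Matrix.mul_apply, Fin.sum_univ_two, Matrix.smul_apply, smul_eq_mul,
      Matrix.cons_val', Matrix.cons_val_zero, Matrix.cons_val_one, Matrix.head_cons,
      Matrix.empty_val', Matrix.cons_val_fin_one, Matrix.head_fin_const, Fin.isValue, Fin.mk_zero, Fin.mk_one,
      Matrix.cons_val_zero, Matrix.of_apply] <;>
    rw [hkey, hkey, ← mul_add]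
  · convert mem_OK_of_int m (a * a' * (d:ℤ) + b * c' * (m₁:ℤ)) (-(b * c' * (m₁:ℤ))) using 1
    rw [inv_mul_eq_iff_eq_mul₀ hd0]
    push_cast
    linear_combination (-(b:ℂ) * (c':ℂ)) * hs2 + ((b:ℂ) * (c':ℂ) * (1 - sqrtNegM m)) * hmc
  · convert mem_OK_of_int m (b * e' * (m:ℤ)) (a * b' + b * e') using 1
    rw [inv_mul_eq_iff_eq_mul₀ hd0]
    push_cast
    ring
  · convert mem_OK_of_int m (c * a' * (m:ℤ)) (-(c * a' + e * c')) using 1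
    rw [inv_mul_eq_iff_eq_mul₀ hd0]
    push_cast
    ring
  · convert mem_OK_of_int m (c * b' * (m₁:ℤ) + e * e' * (d:ℤ)) (c * b' * (m₁:ℤ)) using 1
    rw [inv_mul_eq_iff_eq_mul₀ hd0]
    push_cast
    linear_combination (-(c:ℂ) * (b':ℂ)) * hs2 + ((c:ℂ) * (b':ℂ) * (1 + sqrtNegM m)) * hmc
end
end

section
/- Fix r ∈ ℤ. Let α be a complex-valued function on {T ∈ Λ(2,O_K) : T ≥ 0} and α* : ℕ₀ → ℂ be such that the Krieg relation α(T) = Σ_{η ∈ ℕ, η | ε(T)} η^{r−1}·α*(−d_K·det(T)/η²) holds for all T ∈ Λ(2,O_K) with T ≥ 0, T ≠ 0. Then α satisfies the Sugano relation: α(T) = Σ_{η ∈ ℕ, η | ε(T)} η^{r−1}·α((1, t/η; t̄/η, kl/η²)) for all T = (k, t; t̄, l) ∈ Λ(2,O_K) with T ≥ 0, T ≠ 0. In particular, Krieg's Maass space M(r,O_K) is contained in Sugano's Maass space S(r,O_K). -/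
noncomputable section

open Complex Matrix
open scoped ComplexOrder

lemma okstar_natmul {m : ℕ} (c : ℕ) {t : ℂ} (ht : t ∈ OKstar m) : (c : ℂ) * t ∈ OKstar m := by
  obtain ⟨a, ha, rfl⟩ := ht
  exact ⟨(c : ℂ) * a, Subring.mul_mem _ (natCast_mem (OK m) c) ha, (mul_div_assoc _ _ _).symm⟩

lemma lambda_nsmul (m c : ℕ) {T : Matrix (Fin 2) (Fin 2) ℂ} (h : inLambda2 m T) :
    inLambda2 m ((c : ℂ) • T) := by
  obtain ⟨hH, ⟨k, hk⟩, ⟨l, hl⟩, ht⟩ := h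
  refine ⟨?_, ⟨c * k, ?_⟩, ⟨c * l, ?_⟩, ?_⟩
  · rw [conjTranspose_smul, hH]; norm_num
  · simp [hk]
  · simp [hl]
  · simpa using okstar_natmul c ht

lemma eps_spec (m : ℕ) {T : Matrix (Fin 2) (Fin 2) ℂ} (h : eps m T ≠ 0) :
    0 < eps m T ∧ inLambda2 m (((eps m T : ℕ) : ℂ)⁻¹ • T) := by
  have hmem : eps m T ∈ { q : ℕ | 0 < q ∧ inLambda2 m (((q : ℂ))⁻¹ • T) } := by
    apply Nat.sSup_mem
    · by_contra hne
      rw [Set.not_nonempty_iff_eq_empty] at hne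
      apply h
      unfold eps
      rw [hne]
      exact csSup_empty
    · by_contra hbdd
      exact h (Set.Infinite.Nat.sSup_eq_zero (fun hfin => hbdd hfin.bddAbove))
  exact hmem

lemma divisor_lambda {m η : ℕ} {T : Matrix (Fin 2) (Fin 2) ℂ}
    (hη : η ∈ (eps m T).divisors) : 0 < η ∧ inLambda2 m ((η : ℂ)⁻¹ • T) := by
  rw [Nat.mem_divisors] at hη
  obtain ⟨⟨c, hc⟩, hne⟩ := hη
  obtain ⟨hpos, hΛ⟩ := eps_spec m hne
  have hηpos : 0 < η := by
    rcases Nat.eq_zero_or_pos η with h0 | h0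
    · exfalso; apply hne; rw [hc, h0, zero_mul]
    · exact h0
  have hcpos : 0 < c := by
    rcases Nat.eq_zero_or_pos c with h0 | h0
    · exfalso; apply hne; rw [hc, h0, mul_zero]
    · exact h0
  refine ⟨hηpos, ?_⟩
  have : (η : ℂ)⁻¹ • T = (c : ℂ) • (((eps m T : ℕ) : ℂ)⁻¹ • T) := by
    rw [smul_smul]
    congr 1
    rw [hc]
    push_cast
    field_simp
  rw [this]
  exact lambda_nsmul m c hΛ

lemma sugano_props {m η : ℕ} {T : Matrix (Fin 2) (Fin 2) ℂ}
    (hT : inLambda2 m T) (hPSD : T.PosSemidef)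
    (hηpos : 0 < η) (hΛη : inLambda2 m ((η : ℂ)⁻¹ • T)) :
    inLambda2 m (suganoMat T η) ∧ (suganoMat T η).PosSemidef ∧ suganoMat T η ≠ 0 ∧
      eps m (suganoMat T η) = 1 ∧ (suganoMat T η).det = T.det / (η : ℂ) ^ 2 := by
  have hηC : (η : ℂ) ≠ 0 := Nat.cast_ne_zero.mpr hηpos.ne'
  obtain ⟨hH, ⟨k, hk⟩, ⟨l, hl⟩, htt⟩ := hT
  obtain ⟨hH', ⟨k', hk'⟩, ⟨l', hl'⟩, ht'⟩ := hΛη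
  have hk'' : T 0 0 = (η : ℂ) * (k' : ℂ) := by
    rw [Matrix.smul_apply, smul_eq_mul] at hk'
    field_simp at hk'
    linear_combination hk'
  have hl'' : T 1 1 = (η : ℂ) * (l' : ℂ) := by
    rw [Matrix.smul_apply, smul_eq_mul] at hl'
    field_simp at hl'
    linear_combination hl'
  have hconj : T 1 0 = (starRingEnd ℂ) (T 0 1) := by
    conv_lhs => rw [← hH]
    rfl
  have hdetδ : ∃ δ : ℝ, 0 ≤ δ ∧ T.det = (δ : ℂ) := by
    refine ⟨∏ i, hPSD.1.eigenvalues i,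
      Finset.prod_nonneg fun i _ => hPSD.eigenvalues_nonneg i, ?_⟩
    rw [hPSD.1.det_eq_prod_eigenvalues]
    norm_cast
  obtain ⟨δ, hδ0, hδ⟩ := hdetδ
  set s : ℂ := T 0 1 / (η : ℂ) with hs
  have hS00 : suganoMat T η 0 0 = 1 := by simp [suganoMat]
  have hS01 : suganoMat T η 0 1 = s := by simp [suganoMat, hs]
  have hS10 : suganoMat T η 1 0 = (starRingEnd ℂ) s := by
    simp [suganoMat, hs, hconj, map_div₀]
  have hS11 : suganoMat T η 1 1 = ((δ / (η : ℝ) ^ 2 : ℝ) : ℂ) + s * (starRingEnd ℂ) s := by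
    have hTd : T 0 0 * T 1 1 = T.det + T 0 1 * T 1 0 := by
      rw [Matrix.det_fin_two]; ring
    simp only [suganoMat, Matrix.cons_val', Matrix.cons_val_one, Matrix.head_cons,
      Matrix.head_fin_const, Matrix.cons_val_fin_one, Matrix.empty_val',
      Matrix.cons_val_zero, Matrix.of_apply]
    rw [hTd, hδ, hconj, hs]
    rw [map_div₀, map_natCast]
    push_cast
    field_simp
  have hΛS : inLambda2 m (suganoMat T η) := by
    refine ⟨?_, ⟨1, by simp [hS00]⟩, ⟨k' * l', ?_⟩, ?_⟩
    · ext i j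
      rw [Matrix.conjTranspose_apply]
      fin_cases i <;> fin_cases j <;>
        (simp only [Fin.zero_eta, Fin.mk_one, hS00, hS01, hS10, hS11, Complex.star_def,
          _root_.map_one, map_add, _root_.map_mul, Complex.conj_conj, Complex.conj_ofReal]
         <;> try ring)
    · have : suganoMat T η 1 1 = T 0 0 * T 1 1 / (η : ℂ) ^ 2 := by simp [suganoMat]
      rw [this, hk'', hl'']
      push_cast
      field_simp
    · rw [hS01, hs]
      have := ht'
      rw [Matrix.smul_apply, smul_eq_mul] at this
      rwa [div_eq_inv_mul]
  have hPSDS : (suganoMat T η).PosSemidef := by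
    refine Matrix.PosSemidef.of_dotProduct_mulVec_nonneg ?_ ?_
    · exact hΛS.1
    · intro x
      have expand : star x ⬝ᵥ (suganoMat T η) *ᵥ x =
          ((Complex.normSq (x 0 + s * x 1) + (δ / (η : ℝ) ^ 2) * Complex.normSq (x 1) : ℝ) : ℂ) := by
        simp only [dotProduct, Matrix.mulVec, Fin.sum_univ_two, Pi.star_apply,
          RCLike.star_def, hS00, hS01, hS10, hS11]
        push_cast
        rw [Complex.normSq_eq_conj_mul_self, Complex.normSq_eq_conj_mul_self]
        simp only [map_add, _root_.map_mul, map_inv₀, map_natCast]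
        ring
      rw [expand, Complex.zero_le_real]
      have : (0:ℝ) ≤ δ / (η : ℝ) ^ 2 := by positivity
      have h1 := Complex.normSq_nonneg (x 0 + s * x 1)
      have h2 := Complex.normSq_nonneg (x 1)
      nlinarith
  have hne0 : suganoMat T η ≠ 0 := by
    intro h
    have := congrFun (congrFun h 0) 0
    rw [hS00] at this
    simp at this
  have hepsS : eps m (suganoMat T η) = 1 := by
    have hset : { q : ℕ | 0 < q ∧ inLambda2 m ((q : ℂ)⁻¹ • suganoMat T η) } = {1} := by
      ext q
      simp only [Set.mem_setOf_eq, Set.mem_singleton_iff]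
      constructor
      · rintro ⟨hq, _, ⟨a, ha⟩, _⟩
        rw [Matrix.smul_apply, hS00, smul_eq_mul, mul_one] at ha
        have hqC : (q : ℂ) ≠ 0 := Nat.cast_ne_zero.mpr hq.ne'
        have h2 : ((a * q : ℤ) : ℂ) = ((1 : ℤ) : ℂ) := by
          push_cast
          rw [← ha]
          field_simp
        have h3 : a * (q : ℤ) = 1 := Int.cast_injective h2
        have h4 : (q : ℤ) ∣ 1 := Dvd.intro_left a h3
        have h5 : q ∣ 1 := by exact_mod_cast h4
        exact Nat.dvd_one.mp h5
      · rintro rfl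
        refine ⟨one_pos, ?_⟩
        simpa using hΛS
    unfold eps
    rw [hset, csSup_singleton]
  have hdetS : (suganoMat T η).det = T.det / (η : ℂ) ^ 2 := by
    rw [Matrix.det_fin_two, hS00, hS01, hS10, hS11, hδ]
    push_cast
    field_simp
    ring
  exact ⟨hΛS, hPSDS, hne0, hepsS, hdetS⟩

/-- the Krieg relation implies the Sugano relation; in particular Krieg's
Maass space is contained in Sugano's Maass space. -/
theorem kriegRelation_implies_suganoRelation (m : ℕ) (hm : 0 < m) (hmsf : Squarefree m)
    (r : ℤ) (α : Matrix (Fin 2) (Fin 2) ℂ → ℂ) (αstar : ℕ → ℂ)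
    (hK : KriegRelation m r α αstar) :
    SuganoRelation m r α := by
  intro T hT hPSD hne
  rw [hK T hT hPSD hne]
  apply Finset.sum_congr rfl
  intro η hη
  obtain ⟨hηpos, hΛη⟩ := divisor_lambda hη
  obtain ⟨hΛS, hPSDS, hne0, hepsS, hdetS⟩ := sugano_props hT hPSD hηpos hΛη
  congr 1
  rw [hK _ hΛS hPSDS hne0, hepsS, Nat.divisors_one, Finset.sum_singleton, hdetS]
  simp [_root_.one_zpow, mul_div_assoc]
end
end
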